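/- arXiv:1706.02155 — 8 statements merged into one kernel-verified Lean document; each statement's English description precedes it below -/
import Mathlib

section
/- Let Ω be the open unit disk in ℝ² ≅ ℂ and let γ ∈ L²(Ω). For all integers i, j ≥ 1, the following integral identities hold: ∫_Ω γ(z) ⟨∇Re(z^i), ∇Re(z^j)⟩ dz = ∫_Ω γ(z) ⟨∇Im(z^i), ∇Im(z^j)⟩ dz = i·j·π·ζ_{i,j} ∫₀¹ r^{i+j−1} a_{|i−j|}(r) dr, where ζ_{i,j} = 2 if i = j and ζ_{i,j} = 1 otherwise. -/
open MeasureTheory Real Filter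
open scoped RealInnerProductSpace

/-- Angular Fourier cosine coefficient `a_k(r)` of a function `γ` on the unit disk:
`a_0(r) = (1/(2π)) ∫₀^{2π} γ(r e^{iφ}) dφ` and for `k ≥ 1`,
`a_k(r) = (1/π) ∫₀^{2π} γ(r e^{iφ}) cos(kφ) dφ`. -/
noncomputable def fourierCosCoeff (γ : ℂ → ℝ) (k : ℕ) (r : ℝ) : ℝ :=
  if k = 0 then
    (1 / (2 * π)) * ∫ φ in (0:ℝ)..(2 * π), γ ((r : ℂ) * Complex.exp (Complex.I * (φ : ℂ)))
  else
    (1 / π) * ∫ φ in (0:ℝ)..(2 * π),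
      γ ((r : ℂ) * Complex.exp (Complex.I * (φ : ℂ))) * Real.cos (k * φ)

/-! For holomorphic `f`, the gradients of `Re f` and `Im f` are `conj f'` and `I * conj f'`, so
both inner products in the theorem equal `Re (i z^(i-1) * conj (j z^(j-1)))`, which at
`z = r e^{iφ}` is `i j r^(i+j-2) cos ((i-j) φ)`. Integrating in polar coordinates, the angular
integral of `γ` against `cos (|i-j| φ)` is `π a_{|i-j|}(r)`, or `2π a_0(r)` when `i = j`. -/

open Set

section Gradient

variable {f g : ℂ → ℂ} {f' g' z : ℂ}

theorem HasDerivAt.hasGradientAt_re (hf : HasDerivAt f f' z) :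
    HasGradientAt (fun w => (f w).re) (starRingEnd ℂ f') z := by
  rw [hasGradientAt_iff_hasFDerivAt]
  refine (Complex.reCLM.hasFDerivAt.comp z (hf.hasFDerivAt.restrictScalars ℝ)).congr_fderiv ?_
  ext v
  simp [InnerProductSpace.toDual_apply_apply, Complex.inner, mul_comm]

theorem HasDerivAt.hasGradientAt_im (hf : HasDerivAt f f' z) :
    HasGradientAt (fun w => (f w).im) (Complex.I * starRingEnd ℂ f') z := by
  simpa [Complex.mul_re] using (hf.const_mul (-Complex.I)).hasGradientAt_re

theorem inner_gradient_re_re (hf : HasDerivAt f f' z) (hg : HasDerivAt g g' z) :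
    ⟪gradient (fun w => (f w).re) z, gradient (fun w => (g w).re) z⟫ =
      (f' * starRingEnd ℂ g').re := by
  rw [hf.hasGradientAt_re.gradient, hg.hasGradientAt_re.gradient, Complex.inner,
    Complex.conj_conj, mul_comm]

theorem inner_gradient_im_im (hf : HasDerivAt f f' z) (hg : HasDerivAt g g' z) :
    ⟪gradient (fun w => (f w).im) z, gradient (fun w => (g w).im) z⟫ =
      (f' * starRingEnd ℂ g').re := by
  rw [hf.hasGradientAt_im.gradient, hg.hasGradientAt_im.gradient, Complex.inner, map_mul,
    Complex.conj_I, Complex.conj_conj]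
  congr 1
  linear_combination (-(f' * starRingEnd ℂ g')) * Complex.I_sq

end Gradient

section Polar

variable {E : Type*} [NormedAddCommGroup E] [NormedSpace ℝ E]

theorem MeasureTheory.Integrable.integrableOn_smul_comp_polarCoord_symm {f : ℝ × ℝ → E}
    (hf : Integrable f) :
    IntegrableOn (fun p => p.1 • f (polarCoord.symm p)) polarCoord.target := by
  have h := (integrableOn_image_iff_integrableOn_abs_det_fderiv_smul volume
    polarCoord.open_target.measurableSet
    (fun p _ => (hasFDerivAt_polarCoord_symm p).hasFDerivWithinAt) polarCoord.symm.injOn f).1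
    hf.integrableOn
  refine h.congr_fun (fun p hp => ?_) polarCoord.open_target.measurableSet
  simp only [det_fderivPolarCoordSymm, abs_of_pos (show 0 < p.1 from hp.1)]

theorem MeasureTheory.Integrable.integrableOn_smul_comp_complexPolarCoord_symm {f : ℂ → E}
    (hf : Integrable f) :
    IntegrableOn (fun p => p.1 • f (Complex.polarCoord.symm p)) polarCoord.target :=
  ((Complex.volume_preserving_equiv_real_prod.symm.integrable_comp_emb
    Complex.measurableEquivRealProd.symm.measurableEmbedding).2
      hf).integrableOn_smul_comp_polarCoord_symm

theorem Function.Periodic.setIntegral_Ioo_neg_pi_pi {f : ℝ → E}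
    (hf : Function.Periodic f (2 * π)) :
    ∫ θ in Ioo (-π) π, f θ = ∫ θ in 0..2 * π, f θ := by
  rw [← integral_Ioc_eq_integral_Ioo, ← intervalIntegral.integral_of_le (by linarith [pi_pos]),
    ← zero_add (2 * π), ← hf.intervalIntegral_add_eq (-π) 0]
  ring_nf

theorem integral_eq_integral_Ioi_smul_integral_circle {f : ℂ → E} (hf : Integrable f) :
    ∫ z, f z =
      ∫ r in Ioi (0 : ℝ), r • ∫ θ in 0..2 * π, f (r * Complex.exp (Complex.I * θ)) := by
  have hpolar (p : ℝ × ℝ) :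
      Complex.polarCoord.symm p = p.1 * Complex.exp (Complex.I * p.2) := by
    rw [Complex.polarCoord_symm_apply, mul_comm Complex.I, Complex.exp_mul_I,
      Complex.ofReal_cos, Complex.ofReal_sin]
  have hperiodic (r : ℝ) :
      Function.Periodic (fun θ : ℝ => f (r * Complex.exp (Complex.I * θ))) (2 * π) := by
    intro θ
    simp only [Complex.ofReal_add, Complex.ofReal_mul, Complex.ofReal_ofNat, mul_comm Complex.I]
    exact congrArg (fun w => f (r * w)) (Complex.exp_mul_I_periodic _)
  rw [← Complex.integral_comp_polarCoord_symm, polarCoord_target, Measure.volume_eq_prod,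
    setIntegral_prod _ (by simpa [Measure.volume_eq_prod] using
      hf.integrableOn_smul_comp_complexPolarCoord_symm)]
  simp only [hpolar, integral_smul, (hperiodic _).setIntegral_Ioo_neg_pi_pi]

theorem integral_ball_eq_intervalIntegral_smul_integral_circle {f : ℂ → E} {R : ℝ}
    (hR : 0 ≤ R) (hf : IntegrableOn f (Metric.ball 0 R)) :
    ∫ z in Metric.ball 0 R, f z =
      ∫ r in 0..R, r • ∫ θ in 0..2 * π, f (r * Complex.exp (Complex.I * θ)) := by
  rw [← integral_indicator measurableSet_ball,
    integral_eq_integral_Ioi_smul_integral_circle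
      ((integrable_indicator_iff measurableSet_ball).2 hf),
    intervalIntegral.integral_of_le hR, integral_Ioc_eq_integral_Ioo, ← Ioi_inter_Iio,
    ← setIntegral_indicator measurableSet_Iio]
  refine setIntegral_congr_fun measurableSet_Ioi fun r (hr : 0 < r) => ?_
  by_cases hrR : r < R <;> simp [indicator, abs_of_pos hr, hrR]

end Polar

theorem re_pow_mul_conj_pow_ofReal_mul_exp (r θ : ℝ) (a b : ℕ) :
    (((r : ℂ) * Complex.exp (Complex.I * θ)) ^ a *
        starRingEnd ℂ ((r : ℂ) * Complex.exp (Complex.I * θ)) ^ b).re =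
      r ^ (a + b) * cos (((a : ℤ) - b).natAbs * θ) := by
  have hconj : starRingEnd ℂ ((r : ℂ) * Complex.exp (Complex.I * θ)) =
      r * Complex.exp (-(Complex.I * θ)) := by
    rw [map_mul, Complex.conj_ofReal, ← Complex.exp_conj, map_mul, Complex.conj_I,
      Complex.conj_ofReal, neg_mul]
  have hexp : ((r : ℂ) * Complex.exp (Complex.I * θ)) ^ a *
        (r * Complex.exp (-(Complex.I * θ))) ^ b =
      (r ^ (a + b) : ℝ) * Complex.exp (((a - b : ℝ) * θ : ℝ) * Complex.I) := by
    rw [mul_pow, mul_pow, ← Complex.exp_nat_mul, ← Complex.exp_nat_mul, pow_add]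
    push_cast
    rw [show ((a : ℂ) - b) * θ * Complex.I = a * (Complex.I * θ) + b * -(Complex.I * θ) by
      ring, Complex.exp_add]
    ring
  have hcos : cos (((a : ℤ) - b).natAbs * θ) = cos ((a - b : ℝ) * θ) := by
    rw [Nat.cast_natAbs, Int.cast_abs, Int.cast_sub, Int.cast_natCast, Int.cast_natCast]
    rcases abs_choice ((a : ℝ) - b) with h | h
    · rw [h]
    · rw [h, neg_mul, cos_neg]
  rw [hconj, hexp, Complex.re_ofReal_mul, Complex.exp_ofReal_mul_I_re, hcos]

theorem intervalIntegral_mul_cos_eq_fourierCosCoeff (γ : ℂ → ℝ) (k : ℕ) (r : ℝ) :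
    ∫ θ in 0..2 * π, γ (r * Complex.exp (Complex.I * θ)) * cos (k * θ) =
      (if k = 0 then 2 else 1) * π * fourierCosCoeff γ k r := by
  have := pi_ne_zero
  rcases eq_or_ne k 0 with rfl | hk
  · simp only [fourierCosCoeff, CharP.cast_eq_zero, zero_mul, cos_zero, mul_one, if_true]
    field_simp
  · simp only [fourierCosCoeff, hk, if_false]
    field_simp

theorem integral_ball_mul_re_pow_mul_conj_pow {γ : ℂ → ℝ}
    (hγ : IntegrableOn γ (Metric.ball 0 1)) (a b : ℕ) :
    ∫ z in Metric.ball 0 1, γ z * (z ^ a * starRingEnd ℂ z ^ b).re =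
      (if a = b then 2 else 1) * π *
        ∫ r in 0..1, r ^ (a + b + 1) * fourierCosCoeff γ ((a : ℤ) - b).natAbs r := by
  have hint : IntegrableOn (fun z => γ z * (z ^ a * starRingEnd ℂ z ^ b).re) (Metric.ball 0 1) :=
    hγ.mul_continuousOn_of_subset (by fun_prop) measurableSet_ball (isCompact_closedBall 0 1)
      Metric.ball_subset_closedBall
  have hk : ((a : ℤ) - b).natAbs = 0 ↔ a = b := by omega
  rw [integral_ball_eq_intervalIntegral_smul_integral_circle zero_le_one hint,
    ← intervalIntegral.integral_const_mul]
  refine intervalIntegral.integral_congr fun r _ => ?_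
  simp only [re_pow_mul_conj_pow_ofReal_mul_exp, smul_eq_mul, mul_left_comm _ (r ^ (a + b)),
    intervalIntegral.integral_const_mul, intervalIntegral_mul_cos_eq_fourierCosCoeff, hk]
  ring

/-- for `γ ∈ L²` of the unit disk and `i, j ≥ 1`,
`∫_Ω γ ⟨∇Re(z^i), ∇Re(z^j)⟩ = ∫_Ω γ ⟨∇Im(z^i), ∇Im(z^j)⟩
  = i j π ζ_{i,j} ∫₀¹ r^{i+j-1} a_{|i-j|}(r) dr`. -/
theorem linearized_DtN_cos_cos_sin_sin (γ : ℂ → ℝ)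
    (hγ : MemLp γ 2 (volume.restrict (Metric.ball (0:ℂ) 1)))
    (i j : ℕ) (hi : 1 ≤ i) (hj : 1 ≤ j) :
    (∫ z in Metric.ball (0:ℂ) 1,
        γ z * ⟪gradient (fun w : ℂ => (w ^ i).re) z,
               gradient (fun w : ℂ => (w ^ j).re) z⟫)
      = (i : ℝ) * j * π * (if i = j then 2 else 1) *
          ∫ r in (0:ℝ)..1, r ^ (i + j - 1) * fourierCosCoeff γ ((i : ℤ) - j).natAbs r
    ∧
    (∫ z in Metric.ball (0:ℂ) 1,
        γ z * ⟪gradient (fun w : ℂ => (w ^ i).im) z,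
               gradient (fun w : ℂ => (w ^ j).im) z⟫)
      = (i : ℝ) * j * π * (if i = j then 2 else 1) *
          ∫ r in (0:ℝ)..1, r ^ (i + j - 1) * fourierCosCoeff γ ((i : ℤ) - j).natAbs r := by
  have : IsFiniteMeasure (volume.restrict (Metric.ball (0 : ℂ) 1)) :=
    isFiniteMeasure_restrict.2 measure_ball_lt_top.ne
  have hderiv (z : ℂ) : ((i * z ^ (i - 1) : ℂ) * starRingEnd ℂ (j * z ^ (j - 1))).re =
      i * j * (z ^ (i - 1) * starRingEnd ℂ z ^ (j - 1)).re := by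
    simp only [map_mul, map_natCast, map_pow]
    rw [show (i * z ^ (i - 1) : ℂ) * (j * starRingEnd ℂ z ^ (j - 1)) =
      ((i * j : ℝ) : ℂ) * (z ^ (i - 1) * starRingEnd ℂ z ^ (j - 1)) by push_cast; ring,
      Complex.re_ofReal_mul]
  have key : ∫ z in Metric.ball 0 1,
        γ z * ((i * z ^ (i - 1) : ℂ) * starRingEnd ℂ (j * z ^ (j - 1))).re =
      (i : ℝ) * j * π * (if i = j then 2 else 1) *
          ∫ r in (0:ℝ)..1, r ^ (i + j - 1) * fourierCosCoeff γ ((i : ℤ) - j).natAbs r := by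
    simp only [hderiv, mul_left_comm (γ _), integral_const_mul,
      integral_ball_mul_re_pow_mul_conj_pow (hγ.integrable one_le_two)]
    rw [show i - 1 + (j - 1) + 1 = i + j - 1 by omega,
      show ((i - 1 : ℕ) : ℤ) - (j - 1 : ℕ) = i - j by omega]
    simp only [show i - 1 = j - 1 ↔ i = j by omega]
    ring
  exact ⟨by simpa only [inner_gradient_re_re (hasDerivAt_pow i _) (hasDerivAt_pow j _)] using key,
    by simpa only [inner_gradient_im_im (hasDerivAt_pow i _) (hasDerivAt_pow j _)] using key⟩
end

section
/- Let Ω be the open unit disk in ℝ² ≅ ℂ and let c ∈ L²(Ω). Define J^{cc}_{i,j} = ∫_Ω c Re(z^i) Re(z^j) dz, J^{ss}_{i,j} = ∫_Ω c Im(z^i) Im(z^j) dz, J^{sc}_{i,j} = ∫_Ω c Im(z^i) Re(z^j) dz and J^{cs}_{i,j} = ∫_Ω c Re(z^i) Im(z^j) dz. Then the matrices (J^{ss} − J^{cc})_{i,j≥0} and (J^{sc} + J^{cs})_{i,j≥0} are Hankel matrices: whenever i + j = i' + j', one has J^{ss}_{i,j} − J^{cc}_{i,j} = J^{ss}_{i',j'}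 − J^{cc}_{i',j'} and J^{sc}_{i,j} + J^{cs}_{i,j} = J^{sc}_{i',j'} + J^{cs}_{i',j'}. -/
open MeasureTheory

/-! Since `Im a Im b - Re a Re b = -Re (a b)` and `Im a Re b + Re a Im b = Im (a b)`, the
entries `(J^{ss} - J^{cc})_{i,j}` and `(J^{sc} + J^{cs})_{i,j}` are `-∫_Ω c Re(z^{i+j})` and
`∫_Ω c Im(z^{i+j})`. Splitting these integrals is legitimate because `c ∈ L²(Ω) ⊆ L¹(Ω)` and
the harmonic polynomials are bounded on the compact closed disk. -/

namespace Complex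

theorem im_mul_im_sub_re_mul_re (z w : ℂ) : z.im * w.im - z.re * w.re = -(z * w).re := by
  rw [mul_re]; ring

theorem im_mul_re_add_re_mul_im (z w : ℂ) : z.im * w.re + z.re * w.im = (z * w).im := by
  rw [mul_im]; ring

end Complex

section

variable {X : Type*} [TopologicalSpace X] [MeasurableSpace X] [OpensMeasurableSpace X]
  {μ : Measure X} {s K : Set X}

theorem MeasureTheory.IntegrableOn.mul_continuousOn_mul_continuousOn_of_subset
    {R : Type*} [NormedRing R] [SecondCountableTopologyEither X R] {c f g : X → R}
    (hc : IntegrableOn c s μ) (hf : ContinuousOn f K) (hg : ContinuousOn g K)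
    (hs : MeasurableSet s) (hK : IsCompact K) (hsK : s ⊆ K) :
    IntegrableOn (fun x => c x * f x * g x) s μ :=
  (hc.mul_continuousOn_of_subset hf hs hK hsK).mul_continuousOn_of_subset hg hs hK hsK

variable {c : X → ℝ} {f g : X → ℂ} (hc : IntegrableOn c s μ) (hf : ContinuousOn f K)
  (hg : ContinuousOn g K) (hs : MeasurableSet s) (hK : IsCompact K) (hsK : s ⊆ K)
include hc hf hg hs hK hsK

theorem setIntegral_mul_im_mul_im_sub_setIntegral_mul_re_mul_re :
    ∫ x in s, c x * (f x).im * (g x).im ∂μ - ∫ x in s, c x * (f x).re * (g x).re ∂μ =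
      -∫ x in s, c x * (f x * g x).re ∂μ := by
  rw [← integral_sub, ← integral_neg]
  · congr with x
    rw [← mul_neg, ← Complex.im_mul_im_sub_re_mul_re]
    ring
  all_goals
    refine hc.mul_continuousOn_mul_continuousOn_of_subset ?_ ?_ hs hK hsK <;>
      fun_prop

theorem setIntegral_mul_im_mul_re_add_setIntegral_mul_re_mul_im :
    ∫ x in s, c x * (f x).im * (g x).re ∂μ + ∫ x in s, c x * (f x).re * (g x).im ∂μ =
      ∫ x in s, c x * (f x * g x).im ∂μ := by
  rw [← integral_add]
  · congr with x
    rw [← Complex.im_mul_re_add_re_mul_im]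
    ring
  all_goals
    refine hc.mul_continuousOn_mul_continuousOn_of_subset ?_ ?_ hs hK hsK <;>
      fun_prop

end

/-- for `c ∈ L²` of the unit disk, with
`J^{cc}_{i,j} = ∫_Ω c Re(z^i) Re(z^j)`, `J^{ss}_{i,j} = ∫_Ω c Im(z^i) Im(z^j)`,
`J^{sc}_{i,j} = ∫_Ω c Im(z^i) Re(z^j)` and `J^{cs}_{i,j} = ∫_Ω c Re(z^i) Im(z^j)`,
the matrices `J^{ss} - J^{cc}` and `J^{sc} + J^{cs}` are Hankel matrices:
their `(i,j)` entries only depend on `i + j`. -/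
theorem linearized_Schrodinger_Hankel (c : ℂ → ℝ)
    (hc : MemLp c 2 (volume.restrict (Metric.ball (0:ℂ) 1)))
    (Jcc Jss Jsc Jcs : ℕ → ℕ → ℝ)
    (hJcc : ∀ i j, Jcc i j = ∫ z in Metric.ball (0:ℂ) 1, c z * (z ^ i).re * (z ^ j).re)
    (hJss : ∀ i j, Jss i j = ∫ z in Metric.ball (0:ℂ) 1, c z * (z ^ i).im * (z ^ j).im)
    (hJsc : ∀ i j, Jsc i j = ∫ z in Metric.ball (0:ℂ) 1, c z * (z ^ i).im * (z ^ j).re)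
    (hJcs : ∀ i j, Jcs i j = ∫ z in Metric.ball (0:ℂ) 1, c z * (z ^ i).re * (z ^ j).im)
    (i j i' j' : ℕ) (hsum : i + j = i' + j') :
    Jss i j - Jcc i j = Jss i' j' - Jcc i' j'
    ∧ Jsc i j + Jcs i j = Jsc i' j' + Jcs i' j' := by
  have : IsFiniteMeasure (volume.restrict (Metric.ball (0:ℂ) 1)) :=
    isFiniteMeasure_restrict.mpr measure_ball_lt_top.ne
  have hc₁ : IntegrableOn c (Metric.ball 0 1) := hc.integrable one_le_two
  have hss_cc (a b : ℕ) :
      Jss a b - Jcc a b = -∫ z in Metric.ball (0:ℂ) 1, c z * (z ^ (a + b)).re := by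
    rw [hJss, hJcc]; simp only [pow_add]
    exact setIntegral_mul_im_mul_im_sub_setIntegral_mul_re_mul_re hc₁ (continuousOn_pow a)
      (continuousOn_pow b) measurableSet_ball (isCompact_closedBall 0 1)
      Metric.ball_subset_closedBall
  have hsc_cs (a b : ℕ) :
      Jsc a b + Jcs a b = ∫ z in Metric.ball (0:ℂ) 1, c z * (z ^ (a + b)).im := by
    rw [hJsc, hJcs]; simp only [pow_add]
    exact setIntegral_mul_im_mul_re_add_setIntegral_mul_re_mul_im hc₁ (continuousOn_pow a)
      (continuousOn_pow b) measurableSet_ball (isCompact_closedBall 0 1)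
      Metric.ball_subset_closedBall
  exact ⟨by rw [hss_cc, hss_cc, hsum], by rw [hsc_cs, hsc_cs, hsum]⟩
end

section
/- Let (λ_i)_{i≥0} be a sequence of pairwise distinct real numbers with λ_i > −1/2 for all i, and let L_n(x) = ∑_{k=0}^{n} c_{k,n} x^{λ_k} be the n-th Müntz–Legendre polynomial, where c_{k,n} = (∏_{j=0}^{n−1} (λ_k + λ_j + 1)) / (∏_{j=0, j≠k}^{n} (λ_k − λ_j)). Then for all l, n ≥ 0 the inner product A_{l,n} := ∫₀¹ L_n(x) x^{λ_l} dx satisfies A_{l,n} = (∏_{j=0}^{n−1} (λ_l − λ_j)) / (∏_{j=0}^{n} (1 + λ_l + λ_j)); in particular A_{l,n} = 0 whenever n > l. -/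
open MeasureTheory Real Finset

open Polynomial in
lemma aux_residue_sum (s : Finset ℕ) (v : ℕ → ℝ) (hvs : Set.InjOn v s)
    (f : Polynomial ℝ) (hd : f.degree < ((#s - 1 : ℕ) : WithBot ℕ)) :
    ∑ i ∈ s, f.eval (v i) / ∏ j ∈ s.erase i, (v i - v j) = 0 := by
  rcases s.eq_empty_or_nonempty with rfl | hs
  · simp
  have hd' : f.degree < (#s : WithBot ℕ) := by
    exact hd.trans_le (Nat.cast_le.mpr (Nat.sub_le _ _))
  have hfe := Lagrange.eq_interpolate hvs (by exact_mod_cast hd')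
  have hco : f.coeff (#s - 1) = 0 := coeff_eq_zero_of_degree_lt hd
  rw [hfe, Lagrange.interpolate_apply, finset_sum_coeff] at hco
  rw [← hco]
  refine (Finset.sum_congr rfl fun i hi => ?_).symm
  rw [coeff_C_mul]
  have hb : (Lagrange.basis s v i).coeff (#s - 1) = (Lagrange.basis s v i).leadingCoeff := by
    rw [← Lagrange.natDegree_basis hvs hi]; rfl
  rw [hb]
  have hlc : (Lagrange.basis s v i).leadingCoeff = ∏ j ∈ s.erase i, (v i - v j)⁻¹ := by
    rw [Lagrange.basis, leadingCoeff_prod]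
    refine Finset.prod_congr rfl fun j hj => ?_
    rw [Lagrange.basisDivisor, leadingCoeff_mul, leadingCoeff_C,
      (monic_X_sub_C (v j)).leadingCoeff, mul_one]
  rw [hlc, div_eq_mul_inv, ← Finset.prod_inv_distrib]

/-- Müntz–Legendre polynomials. For a sequence `(Λ i)` of pairwise distinct
reals with `Λ i > -1/2`, with `L_n(x) = ∑_{k=0}^n c_{k,n} x^{Λ k}` where
`c_{k,n} = (∏_{j<n} (Λ k + Λ j + 1)) / (∏_{j≤n, j≠k} (Λ k - Λ j))`, the moments
`A_{l,n} = ∫₀¹ L_n(x) x^{Λ l} dx` satisfy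
`A_{l,n} = (∏_{j<n} (Λ l - Λ j)) / (∏_{j≤n} (1 + Λ l + Λ j))`;
in particular `A_{l,n} = 0` whenever `n > l`. -/
theorem muntz_legendre_moments (Λ : ℕ → ℝ)
    (hdist : ∀ i j, i ≠ j → Λ i ≠ Λ j)
    (hlb : ∀ i, -(1/2 : ℝ) < Λ i)
    (L : ℕ → ℝ → ℝ)
    (hL : ∀ n x, L n x = ∑ k ∈ Finset.range (n + 1),
      ((∏ j ∈ Finset.range n, (Λ k + Λ j + 1)) /
        (∏ j ∈ (Finset.range (n + 1)).erase k, (Λ k - Λ j))) * x ^ (Λ k))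
    (l n : ℕ) :
    (∫ x in (0:ℝ)..1, L n x * x ^ (Λ l))
      = (∏ j ∈ Finset.range n, (Λ l - Λ j)) /
          (∏ j ∈ Finset.range (n + 1), (1 + Λ l + Λ j))
    ∧ (n > l → (∫ x in (0:ℝ)..1, L n x * x ^ (Λ l)) = 0) := by
  have hpos : ∀ i, (0:ℝ) < Λ i + Λ l + 1 := fun i => by
    have := hlb i; have := hlb l; linarith
  have hmain : (∫ x in (0:ℝ)..1, L n x * x ^ (Λ l))
      = (∏ j ∈ Finset.range n, (Λ l - Λ j)) /
          (∏ j ∈ Finset.range (n + 1), (1 + Λ l + Λ j)) := by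
    -- the coefficient
    set c : ℕ → ℝ := fun k => (∏ j ∈ Finset.range n, (Λ k + Λ j + 1)) /
        (∏ j ∈ (Finset.range (n + 1)).erase k, (Λ k - Λ j)) with hc
    -- Step 1: compute the integral as a sum
    have hint : (∫ x in (0:ℝ)..1, L n x * x ^ (Λ l))
        = ∑ k ∈ Finset.range (n + 1), c k * (1 / (Λ k + Λ l + 1)) := by
      have h1 : (∫ x in (0:ℝ)..1, L n x * x ^ (Λ l))
          = ∫ x in (0:ℝ)..1, ∑ k ∈ Finset.range (n + 1), c k * x ^ (Λ k + Λ l) := by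
        refine intervalIntegral.integral_congr_ae (.of_forall fun x hx => ?_)
        rw [Set.uIoc_of_le (by norm_num : (0:ℝ) ≤ 1)] at hx
        rw [hL, Finset.sum_mul]
        refine Finset.sum_congr rfl fun k _ => ?_
        rw [mul_assoc, ← Real.rpow_add hx.1]
      rw [h1, intervalIntegral.integral_finset_sum]
      · refine Finset.sum_congr rfl fun k _ => ?_
        rw [intervalIntegral.integral_const_mul, integral_rpow (Or.inl (by have := hpos k; linarith)),
          Real.one_rpow, Real.zero_rpow (by have := hpos k; intro h; linarith)]
        ring_nf
      · intro k _
        exact (intervalIntegral.intervalIntegrable_rpow' (by have := hpos k; linarith)).const_mul _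
    rw [hint]
    -- Step 2: residue / Lagrange identity
    classical
    set v : ℕ → ℝ := fun i => if i ≤ n then Λ i else -1 - Λ l with hv
    have hv1 : ∀ i, i ≤ n → v i = Λ i := fun i hi => if_pos hi
    have hv2 : v (n + 1) = -1 - Λ l := if_neg (by omega)
    set f : Polynomial ℝ := ∏ j ∈ Finset.range n, (Polynomial.X + Polynomial.C (Λ j + 1))
      with hf
    have hfm : f.Monic := Polynomial.monic_prod_of_monic _ _
      fun j _ => Polynomial.monic_X_add_C _
    have hfdeg : f.natDegree = n := by
      rw [hf, Polynomial.natDegree_prod _ _ fun j _ => (Polynomial.monic_X_add_C _).ne_zero]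
      simp only [Polynomial.natDegree_X_add_C, Finset.sum_const, smul_eq_mul, mul_one,
        Finset.card_range]
    have hcard : #(Finset.range (n + 2)) = n + 2 := Finset.card_range _
    have hd : f.degree < ((#(Finset.range (n + 2)) - 1 : ℕ) : WithBot ℕ) := by
      rw [hcard, Polynomial.degree_eq_natDegree hfm.ne_zero, hfdeg]
      exact_mod_cast Nat.lt_succ_self n
    have hvs : Set.InjOn v (Finset.range (n + 2)) := by
      intro i hi j hj hij
      simp only [Finset.coe_range, Set.mem_Iio] at hi hj
      by_contra hne
      rcases le_or_gt i n with hin | hin <;> rcases le_or_gt j n with hjn | hjn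
      · exact hdist i j hne (by rwa [hv1 i hin, hv1 j hjn] at hij)
      · have hj1 : j = n + 1 := by omega
        rw [hv1 i hin, hj1, hv2] at hij
        have := hpos i; linarith
      · have hi1 : i = n + 1 := by omega
        rw [hi1, hv2, hv1 j hjn] at hij
        have := hpos j; linarith
      · omega
    have heval : ∀ t : ℝ, f.eval t = ∏ j ∈ Finset.range n, (t + (Λ j + 1)) := by
      intro t; rw [hf, Polynomial.eval_prod]; simp
    have hres := aux_residue_sum (Finset.range (n + 2)) v hvs f hd
    rw [Finset.sum_range_succ] at hres
    -- the term at n+1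
    have hrange : Finset.range (n + 2) = insert (n + 1) (Finset.range (n + 1)) :=
      Finset.range_add_one
    have hterm_top : f.eval (v (n + 1)) /
        ∏ j ∈ (Finset.range (n + 2)).erase (n + 1), (v (n + 1) - v j)
        = ((-1 : ℝ) ^ n * ∏ j ∈ Finset.range n, (Λ l - Λ j)) /
          ((-1 : ℝ) ^ (n + 1) * ∏ j ∈ Finset.range (n + 1), (1 + Λ l + Λ j)) := by
      rw [hrange, Finset.erase_insert (by simp), hv2, heval]
      congr 1
      · rw [show ((-1:ℝ))^n = ∏ _j ∈ Finset.range n, (-1:ℝ) by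
            rw [Finset.prod_const, Finset.card_range], ← Finset.prod_mul_distrib]
        exact Finset.prod_congr rfl fun j _ => by ring
      · rw [show ((-1:ℝ))^(n+1) = ∏ _j ∈ Finset.range (n+1), (-1:ℝ) by
            rw [Finset.prod_const, Finset.card_range], ← Finset.prod_mul_distrib]
        refine Finset.prod_congr rfl fun j hj => ?_
        rw [hv1 j (Nat.lt_succ_iff.mp (Finset.mem_range.mp hj))]; ring
    have hterm : ∀ i ∈ Finset.range (n + 1),
        f.eval (v i) / ∏ j ∈ (Finset.range (n + 2)).erase i, (v i - v j)
        = c i * (1 / (Λ i + Λ l + 1)) := by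
      intro i hi
      have hin : i ≤ n := Nat.lt_succ_iff.mp (Finset.mem_range.mp hi)
      rw [hrange, Finset.erase_insert_of_ne (by omega),
        Finset.prod_insert (by simp), hv1 i hin, hv2, heval]
      have hprod : ∏ j ∈ (Finset.range (n + 1)).erase i, (Λ i - v j)
          = ∏ j ∈ (Finset.range (n + 1)).erase i, (Λ i - Λ j) := by
        refine Finset.prod_congr rfl fun j hj => ?_
        rw [hv1 j (Nat.lt_succ_iff.mp (Finset.mem_range.mp (Finset.mem_of_mem_erase hj)))]
      rw [hprod, hc]
      have h1 : Λ i - (-1 - Λ l) = Λ i + Λ l + 1 := by ring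
      rw [h1, div_mul_div_comm, mul_one, mul_comm (Λ i + Λ l + 1)]
      congr 1
      exact Finset.prod_congr rfl fun j _ => by ring
    rw [Finset.sum_congr rfl hterm, hterm_top] at hres
    have hne : ((-1 : ℝ)) ^ n ≠ 0 := by positivity
    have hT : ((-1 : ℝ) ^ n * ∏ j ∈ Finset.range n, (Λ l - Λ j)) /
          ((-1 : ℝ) ^ (n + 1) * ∏ j ∈ Finset.range (n + 1), (1 + Λ l + Λ j))
        = -((∏ j ∈ Finset.range n, (Λ l - Λ j)) /
          (∏ j ∈ Finset.range (n + 1), (1 + Λ l + Λ j))) := by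
      have hQ : (0:ℝ) < ∏ j ∈ Finset.range (n + 1), (1 + Λ l + Λ j) :=
        Finset.prod_pos fun j _ => by have := hpos j; linarith
      rw [pow_succ]
      field_simp
    rw [hT] at hres
    linarith
  exact ⟨hmain, fun hnl => by
    rw [hmain, Finset.prod_eq_zero (i := l) (Finset.mem_range.mpr hnl) (by ring), zero_div]⟩
end

section
/- Let (λ_i)_{i≥0} be a sequence of pairwise distinct real numbers with λ_i > −1/2 for all i. Define the infinite lower-triangular matrices A_{l,n} = (∏_{j=0}^{n−1} (λ_l − λ_j)) / (∏_{j=0}^{n} (1 + λ_l + λ_j)) (so A_{l,n} = 0 for n > l), and R_{α,β} = (1 + 2λ_α) (∏_{j=0}^{α−1} (1 + λ_β + λ_j)) / (∏_{j=0, j≠β}^{α} (λ_β − λ_j)) for β ≤ α and R_{α,β} = 0 for β > α. Then R is the inverse of A: for all α, β ≥ 0, ∑_{s=0}^{α} R_{α,s} A_{s,β} equals 1 if α = β and 0 otherwise. -/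
open Finset

section Aux
open Polynomial

lemma coeff_lagrange_basis (n : ℕ) (v : ℕ → ℝ) (s : ℕ) (hs : s ∈ range (n+1)) :
    (Lagrange.basis (range (n+1)) v s).coeff n
      = ∏ j ∈ (range (n+1)).erase s, (v s - v j)⁻¹ := by
  have hcard : ((range (n+1)).erase s).card = n := by
    simp [card_erase_of_mem hs]
  have := Polynomial.coeff_prod_of_natDegree_le
    (s := (range (n+1)).erase s)
    (f := fun j => Lagrange.basisDivisor (v s) (v j)) 1
    (fun j _ => by
      unfold Lagrange.basisDivisor
      calc (C (v s - v j)⁻¹ * (X - C (v j))).natDegree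
          ≤ (C (v s - v j)⁻¹).natDegree + (X - C (v j)).natDegree := natDegree_mul_le
        _ ≤ 1 := by simp [natDegree_X_sub_C])
  rw [Lagrange.basis]
  rw [hcard, mul_one] at this
  rw [this]
  refine prod_congr rfl fun j _ => ?_
  unfold Lagrange.basisDivisor
  simp

lemma key_sum (n : ℕ) (v : ℕ → ℝ) (hv : Set.InjOn v (range (n+1)))
    (p : Polynomial ℝ) (hp : p.degree < (n : WithBot ℕ)) :
    ∑ s ∈ range (n+1), p.eval (v s) * (∏ j ∈ (range (n+1)).erase s, (v s - v j))⁻¹ = 0 := by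
  have hdeg : p.degree < (#(range (n+1)) : WithBot ℕ) := by
    rw [card_range]
    exact lt_of_lt_of_le hp (by exact_mod_cast Nat.le_succ n)
  have h1 := Lagrange.eq_interpolate (v := v) hv hdeg
  have h2 : p.coeff n = 0 := coeff_eq_zero_of_degree_lt hp
  rw [h1, Lagrange.interpolate_apply, finset_sum_coeff] at h2
  rw [← h2]
  refine sum_congr rfl fun s hs => ?_
  rw [coeff_C_mul, coeff_lagrange_basis n v s hs, prod_inv_distrib]

end Aux

/-- for a sequence `(Λ i)` of pairwise distinct reals with `Λ i > -1/2`,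
the lower-triangular matrix `A_{l,n} = (∏_{j<n} (Λ l - Λ j)) / (∏_{j≤n} (1 + Λ l + Λ j))`
has inverse `R`, where `R_{α,β} = (1 + 2Λ_α) (∏_{j<α} (1 + Λ_β + Λ_j)) /
(∏_{j≤α, j≠β} (Λ_β - Λ_j))` for `β ≤ α` and `R_{α,β} = 0` for `β > α`:
`∑_{s=0}^{α} R_{α,s} A_{s,β} = δ_{α,β}`. -/
theorem muntz_legendre_moment_matrix_inverse (Λ : ℕ → ℝ)
    (hdist : ∀ i j, i ≠ j → Λ i ≠ Λ j)
    (hlb : ∀ i, -(1/2 : ℝ) < Λ i)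
    (A R : ℕ → ℕ → ℝ)
    (hA : ∀ l n, A l n = (∏ j ∈ Finset.range n, (Λ l - Λ j)) /
        (∏ j ∈ Finset.range (n + 1), (1 + Λ l + Λ j)))
    (hR : ∀ α β, R α β =
      if β ≤ α then
        (1 + 2 * Λ α) * (∏ j ∈ Finset.range α, (1 + Λ β + Λ j)) /
          (∏ j ∈ (Finset.range (α + 1)).erase β, (Λ β - Λ j))
      else 0)
    (α β : ℕ) :
    (∑ s ∈ Finset.range (α + 1), R α s * A s β) = if α = β then 1 else 0 := by
  have hpos : ∀ i j : ℕ, (0:ℝ) < 1 + Λ i + Λ j := fun i j => by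
    have := hlb i; have := hlb j; linarith
  have hQpos : ∀ s m : ℕ, (0:ℝ) < ∏ j ∈ Finset.range m, (1 + Λ s + Λ j) :=
    fun s m => Finset.prod_pos fun j _ => hpos s j
  have hAzero : ∀ s, s < β → A s β = 0 := by
    intro s hs
    rw [hA]
    rw [Finset.prod_eq_zero (Finset.mem_range.2 hs) (by ring), zero_div]
  have hEne : ∀ s, (∏ j ∈ (Finset.range (α + 1)).erase s, (Λ s - Λ j)) ≠ 0 := by
    intro s
    refine Finset.prod_ne_zero_iff.2 fun j hj => sub_ne_zero.2 ?_
    exact hdist s j fun h => (Finset.mem_erase.1 hj).1 h.symm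
  rcases lt_trichotomy α β with hlt | heq | hgt
  · rw [if_neg hlt.ne]
    refine Finset.sum_eq_zero fun s hs => ?_
    rw [hAzero s (lt_of_lt_of_le (Finset.mem_range.1 hs) hlt), mul_zero]
  · subst heq
    rw [if_pos rfl, Finset.sum_range_succ]
    rw [Finset.sum_eq_zero fun s hs => by
      rw [hAzero s (Finset.mem_range.1 hs), mul_zero], zero_add]
    rw [hR, hA, if_pos le_rfl]
    have herase : (Finset.range (α + 1)).erase α = Finset.range α := by
      rw [Finset.range_add_one, Finset.erase_insert (by simp)]
    rw [herase, Finset.prod_range_succ (fun j => 1 + Λ α + Λ j) α]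
    have h1 : (0:ℝ) < 1 + Λ α + Λ α := hpos α α
    have h2 := hQpos α α
    have h3 : (∏ j ∈ Finset.range α, (Λ α - Λ j)) ≠ 0 :=
      Finset.prod_ne_zero_iff.2 fun j hj =>
        sub_ne_zero.2 (hdist α j (Finset.mem_range.1 hj).ne')
    field_simp
    ring
  · rw [if_neg hgt.ne']
    set p : Polynomial ℝ :=
      (∏ j ∈ Finset.range β, (Polynomial.X - Polynomial.C (Λ j))) *
      (∏ j ∈ Finset.Ico (β+1) α, (Polynomial.X + Polynomial.C (1 + Λ j))) with hp
    have hdeg : p.degree < (α : WithBot ℕ) := by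
      have hn1 : (∏ j ∈ Finset.range β, (Polynomial.X - Polynomial.C (Λ j))).natDegree ≤ β := by
        refine le_trans (Polynomial.natDegree_prod_le _ _) ?_
        simp [Polynomial.natDegree_X_sub_C]
      have hn2 : (∏ j ∈ Finset.Ico (β+1) α,
          (Polynomial.X + Polynomial.C (1 + Λ j))).natDegree ≤ α - (β+1) := by
        refine le_trans (Polynomial.natDegree_prod_le _ _) ?_
        calc _ ≤ ∑ j ∈ Finset.Ico (β+1) α, 1 :=
              Finset.sum_le_sum fun j _ => le_of_eq (Polynomial.natDegree_X_add_C _)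
          _ = α - (β+1) := by simp [Nat.card_Ico]
      have : p.natDegree < α := by
        have := Polynomial.natDegree_mul_le (p := ∏ j ∈ Finset.range β,
          (Polynomial.X - Polynomial.C (Λ j))) (q := ∏ j ∈ Finset.Ico (β+1) α,
          (Polynomial.X + Polynomial.C (1 + Λ j)))
        rw [← hp] at this
        omega
      exact lt_of_le_of_lt Polynomial.degree_le_natDegree (by exact_mod_cast this)
    have hinj : Set.InjOn Λ (Finset.range (α+1)) := fun i _ j _ h => by
      by_contra hne; exact hdist i j hne h
    have hkey := key_sum α Λ hinj p hdeg
    have hterm : ∀ s ∈ Finset.range (α+1), R α s * A s β =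
        (1 + 2 * Λ α) * (p.eval (Λ s) *
          (∏ j ∈ (Finset.range (α + 1)).erase s, (Λ s - Λ j))⁻¹) := by
      intro s hs
      rw [hR, hA, if_pos (Nat.lt_succ_iff.1 (Finset.mem_range.1 hs))]
      have heval : p.eval (Λ s) = (∏ j ∈ Finset.range β, (Λ s - Λ j)) *
          (∏ j ∈ Finset.Ico (β+1) α, (1 + Λ s + Λ j)) := by
        simp only [hp, Polynomial.eval_mul, Polynomial.eval_prod, Polynomial.eval_sub,
          Polynomial.eval_add, Polynomial.eval_X, Polynomial.eval_C]
        congr 1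
        exact Finset.prod_congr rfl fun j _ => by ring
      have hsplit : (∏ j ∈ Finset.range α, (1 + Λ s + Λ j)) =
          (∏ j ∈ Finset.range (β+1), (1 + Λ s + Λ j)) *
          (∏ j ∈ Finset.Ico (β+1) α, (1 + Λ s + Λ j)) :=
        (Finset.prod_range_mul_prod_Ico _ (by omega)).symm
      rw [heval, hsplit]
      have h1 := (hQpos s (β+1)).ne'
      have h2 := hEne s
      field_simp
    rw [Finset.sum_congr rfl hterm, ← Finset.mul_sum, hkey, mul_zero]
end

section
/- Fix k ∈ ℕ. If a : (0,1) → ℝ satisfies ∫₀¹ a(r)² r dr < ∞ and ∫₀¹ r^{2i+k−1} a(r) dr = 0 for every integer i ≥ 1, then a = 0 almost everywhere on (0,1). -/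
/-!
Put `f(r) = r^{k+1} a(r)`. By AM-GM, `|f| ≤ (r^{2k+1} + a² r)/2`, so `f` is integrable on `(0,1)`,
and the hypothesis says that `∫₀¹ (r²)ⁿ f = 0` for all `n`. Weierstrass' theorem applied to
`s ↦ g(√s)` shows that the polynomials in `r²` are uniformly dense in `C[0,1]`, so `∫₀¹ g f = 0`
for every continuous `g`; in particular `f` vanishes as a distribution on `(0,1)`, hence a.e.
Since `r^{k+1} ≠ 0` there, `a = 0` a.e.
-/

open MeasureTheory Set Polynomial

theorem integral_eval_mul_eq_zero_of_moments_eq_zero {α : Type*} [MeasurableSpace α]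
    {μ : Measure α} {φ f : α → ℝ} (hint : ∀ n : ℕ, Integrable (fun x => φ x ^ n * f x) μ)
    (hmom : ∀ n : ℕ, ∫ x, φ x ^ n * f x ∂μ = 0) (p : ℝ[X]) :
    ∫ x, p.eval (φ x) * f x ∂μ = 0 := by
  simp_rw [eval_eq_sum_range, Finset.sum_mul, mul_assoc]
  rw [integral_finsetSum _ fun n _ => (hint n).const_mul _]
  simp [integral_const_mul, hmom]

theorem integral_mul_eq_zero_of_forall_approx {α : Type*} [MeasurableSpace α] {μ : Measure α}
    {f g : α → ℝ} (hf : Integrable f μ) (hgf : Integrable (fun x => g x * f x) μ)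
    (happrox : ∀ ε > 0, ∃ h : α → ℝ, Integrable (fun x => h x * f x) μ ∧
      ∫ x, h x * f x ∂μ = 0 ∧ ∀ᵐ x ∂μ, |g x - h x| ≤ ε) :
    ∫ x, g x * f x ∂μ = 0 := by
  set C := ∫ x, |f x| ∂μ
  have hC : 0 ≤ C := integral_nonneg fun x => abs_nonneg _
  refine abs_nonpos_iff.mp (le_of_forall_pos_le_add fun ε hε => ?_)
  obtain ⟨h, hhf, hh0, hgh⟩ := happrox (ε / (C + 1)) (by positivity)
  have hdiff : ∫ x, g x * f x ∂μ = ∫ x, (g x - h x) * f x ∂μ := by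
    simp_rw [sub_mul]
    rw [integral_sub hgf hhf, hh0, sub_zero]
  rw [hdiff, ← Real.norm_eq_abs]
  calc ‖∫ x, (g x - h x) * f x ∂μ‖
      ≤ ∫ x, ε / (C + 1) * |f x| ∂μ := by
        refine norm_integral_le_of_norm_le (hf.abs.const_mul _) ?_
        filter_upwards [hgh] with x hx
        rw [Real.norm_eq_abs, abs_mul]
        exact mul_le_mul_of_nonneg_right hx (abs_nonneg _)
    _ = ε * (C / (C + 1)) := by rw [integral_const_mul]; ring
    _ ≤ 0 + ε := by
        rw [zero_add]
        exact mul_le_of_le_one_right hε.le ((div_le_one (by positivity)).mpr (by linarith))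

theorem exists_polynomial_near_comp_sq {g : ℝ → ℝ} (hg : ContinuousOn g (Icc 0 1)) {ε : ℝ}
    (hε : 0 < ε) : ∃ p : ℝ[X], ∀ r ∈ Icc (0 : ℝ) 1, |p.eval (r ^ 2) - g r| < ε := by
  have hsqrt : MapsTo Real.sqrt (Icc 0 1) (Icc 0 1) := fun s hs =>
    ⟨Real.sqrt_nonneg s, Real.sqrt_le_one.mpr hs.2⟩
  obtain ⟨p, hp⟩ := exists_polynomial_near_of_continuousOn 0 1 _
    (hg.comp Real.continuous_sqrt.continuousOn hsqrt) ε hε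
  refine ⟨p, fun r hr => ?_⟩
  have hr2 : r ^ 2 ∈ Icc (0 : ℝ) 1 := ⟨sq_nonneg r, pow_le_one₀ hr.1 hr.2⟩
  simpa [Real.sqrt_sq hr.1] using hp (r ^ 2) hr2

theorem setIntegral_mul_eq_zero_of_even_moments_eq_zero {f : ℝ → ℝ}
    (hf : IntegrableOn f (Ioo 0 1)) (hmom : ∀ n : ℕ, ∫ r in Ioo 0 1, (r ^ 2) ^ n * f r = 0)
    {g : ℝ → ℝ} (hg : ContinuousOn g (Icc 0 1)) :
    ∫ r in Ioo 0 1, g r * f r = 0 := by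
  have hmul : ∀ {h : ℝ → ℝ}, ContinuousOn h (Icc 0 1) →
      IntegrableOn (fun r => h r * f r) (Ioo 0 1) := fun hh =>
    hf.continuousOn_mul_of_subset hh isCompact_Icc measurableSet_Ioo Ioo_subset_Icc_self
  refine integral_mul_eq_zero_of_forall_approx hf (hmul hg) fun ε hε => ?_
  obtain ⟨p, hp⟩ := exists_polynomial_near_comp_sq hg hε
  have hpoly : ContinuousOn (fun r : ℝ => p.eval (r ^ 2)) (Icc 0 1) := by fun_prop
  refine ⟨fun r => p.eval (r ^ 2), hmul hpoly,
    integral_eval_mul_eq_zero_of_moments_eq_zero (fun n => hmul (by fun_prop)) hmom p, ?_⟩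
  refine ae_restrict_of_forall_mem measurableSet_Ioo fun r hr => ?_
  rw [abs_sub_comm]
  exact (hp r (Ioo_subset_Icc_self hr)).le

theorem ae_eq_zero_of_even_moments_eq_zero {f : ℝ → ℝ} (hf : IntegrableOn f (Ioo 0 1))
    (hmom : ∀ n : ℕ, ∫ r in Ioo 0 1, (r ^ 2) ^ n * f r = 0) :
    ∀ᵐ r ∂(volume.restrict (Ioo (0 : ℝ) 1)), f r = 0 := by
  refine (ae_restrict_iff' measurableSet_Ioo).mpr
    (isOpen_Ioo.ae_eq_zero_of_integral_contDiff_smul_eq_zero hf.locallyIntegrableOn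
      fun g hg _ hgU => ?_)
  have hg0 : ∀ x ∉ Ioo (0 : ℝ) 1, g x • f x = 0 := fun x hx => by
    rw [image_eq_zero_of_notMem_tsupport fun h => hx (hgU h), zero_smul]
  rw [← setIntegral_eq_integral_of_forall_compl_eq_zero hg0]
  exact setIntegral_mul_eq_zero_of_even_moments_eq_zero hf hmom hg.continuous.continuousOn

theorem integrableOn_pow_succ_mul_of_integrableOn_sq_mul {a : ℝ → ℝ} (k : ℕ)
    (hmeas : AEMeasurable a (volume.restrict (Ioo (0 : ℝ) 1)))
    (hL2 : IntegrableOn (fun r => a r ^ 2 * r) (Ioo (0 : ℝ) 1)) :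
    IntegrableOn (fun r => r ^ (k + 1) * a r) (Ioo (0 : ℝ) 1) := by
  have hbound : IntegrableOn (fun r : ℝ => (r ^ (2 * k + 1) + a r ^ 2 * r) / 2) (Ioo 0 1) :=
    (((intervalIntegral.intervalIntegrable_pow _).1.mono_set Ioo_subset_Ioc_self).add hL2).div_const _
  refine hbound.mono' (by fun_prop) (ae_restrict_of_forall_mem measurableSet_Ioo fun r hr => ?_)
  have hamgm := two_mul_le_add_sq (r ^ k) |a r|
  have hr0 : 0 ≤ r := hr.1.le
  rw [Real.norm_eq_abs, abs_mul, abs_of_nonneg (pow_nonneg hr0 _), ← sq_abs (a r)]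
  calc r ^ (k + 1) * |a r| = r * (2 * r ^ k * |a r|) / 2 := by ring
    _ ≤ r * ((r ^ k) ^ 2 + |a r| ^ 2) / 2 := by gcongr
    _ = (r ^ (2 * k + 1) + |a r| ^ 2 * r) / 2 := by ring

/-- completeness of the moments. If `a ∈ L²((0,1), r dr)` and
`∫₀¹ r^{2i+k-1} a(r) dr = 0` for every `i ≥ 1`, then `a = 0` a.e. on `(0,1)`. -/
theorem moments_determine_weighted_L2 (k : ℕ) (a : ℝ → ℝ)
    (hmeas : AEMeasurable a (volume.restrict (Set.Ioo (0:ℝ) 1)))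
    (hL2 : IntegrableOn (fun r => a r ^ 2 * r) (Set.Ioo (0:ℝ) 1))
    (hmom : ∀ i : ℕ, 1 ≤ i → ∫ r in Set.Ioo (0:ℝ) 1, r ^ (2 * i + k - 1) * a r = 0) :
    ∀ᵐ r ∂(volume.restrict (Set.Ioo (0:ℝ) 1)), a r = 0 := by
  have hf := integrableOn_pow_succ_mul_of_integrableOn_sq_mul k hmeas hL2
  have hmomf : ∀ n : ℕ, ∫ r in Ioo 0 1, (r ^ 2) ^ n * (r ^ (k + 1) * a r) = 0 := fun n => by
    have h := hmom (n + 1) (by omega)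
    rw [show 2 * (n + 1) + k - 1 = 2 * n + (k + 1) by omega] at h
    refine Eq.trans ?_ h
    congr 1 with r
    ring
  filter_upwards [ae_eq_zero_of_even_moments_eq_zero hf hmomf, ae_restrict_mem measurableSet_Ioo]
    with r hfr hr
  exact (mul_eq_zero.mp hfr).resolve_left (pow_ne_zero _ hr.1.ne')
end

section
/- Fix k ∈ ℕ. For every n ≥ 0, the squared weighted L²-norm of the Müntz–Legendre polynomial L_n^k is ∫₀¹ (L_n^k(x))² x dx = 1/(4n + 2k + 2). -/
open MeasureTheory Finset

/-- The Müntz–Legendre polynomial `L_n^k(x) = ∑_{l=0}^n c^k_{l,n} x^{2l+k}` with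
`c^k_{l,n} = (∏_{j<n} (l + j + k + 1)) / (∏_{j≤n, j≠l} (l - j))`. -/
noncomputable def muntzLegendre (k n : ℕ) (x : ℝ) : ℝ :=
  ∑ l ∈ Finset.range (n + 1),
    ((∏ j ∈ Finset.range n, ((l : ℝ) + j + k + 1)) /
      (∏ j ∈ (Finset.range (n + 1)).erase l, ((l : ℝ) - j))) * x ^ (2 * l + k)

noncomputable def mc (k n l : ℕ) : ℝ :=
  (∏ j ∈ Finset.range n, ((l : ℝ) + j + k + 1)) /
    (∏ j ∈ (Finset.range (n + 1)).erase l, ((l : ℝ) - j))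

lemma mc_denom_ne (n l : ℕ) (hl : l ∈ Finset.range (n+1)) :
    (∏ j ∈ (Finset.range (n + 1)).erase l, ((l : ℝ) - j)) ≠ 0 := by
  refine Finset.prod_ne_zero_iff.2 fun j hj => ?_
  have hjl : j ≠ l := Finset.ne_of_mem_erase hj
  have : (l:ℝ) ≠ (j:ℝ) := by exact_mod_cast (Ne.symm hjl)
  exact sub_ne_zero.2 this

open Polynomial in
lemma poly_key (k n : ℕ) (z : ℝ) :
    ∑ l ∈ Finset.range (n + 1),
      mc k n l * ∏ j ∈ (Finset.range (n + 1)).erase l, (z - (j:ℝ))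
    = ∏ j ∈ Finset.range n, (z + j + k + 1) := by
  set P : ℝ[X] := ∏ j ∈ Finset.range n, (X + C ((j:ℝ) + k + 1)) with hP
  set Q : ℝ[X] := ∑ l ∈ Finset.range (n+1), C (mc k n l) *
      ∏ j ∈ (Finset.range (n + 1)).erase l, (X - C (j:ℝ)) with hQ
  have hinj : Function.Injective (Nat.cast : ℕ → ℝ) := Nat.cast_injective
  have hcard : ((Finset.range (n+1)).image (Nat.cast : ℕ → ℝ)).card = n + 1 := by
    rw [Finset.card_image_of_injective _ hinj, Finset.card_range]
  have hPdeg : P.degree < (((Finset.range (n+1)).image (Nat.cast : ℕ → ℝ)).card : ℕ) := by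
    rw [hcard]
    calc P.degree ≤ n := by
          rw [hP]
          refine le_trans (Polynomial.degree_prod_le _ _) ?_
          refine le_trans (Finset.sum_le_card_nsmul _ _ 1 ?_) ?_
          · intro j _; exact le_of_eq (Polynomial.degree_X_add_C _)
          · simp
      _ < ((n+1 : ℕ) : WithBot ℕ) := by exact_mod_cast Nat.lt_succ_self n
  have hQdeg : Q.degree < (((Finset.range (n+1)).image (Nat.cast : ℕ → ℝ)).card : ℕ) := by
    rw [hcard]
    calc Q.degree ≤ n := by
          rw [hQ]
          refine le_trans (Polynomial.degree_sum_le _ _) ?_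
          refine Finset.sup_le fun l hl => ?_
          refine le_trans (Polynomial.degree_mul_le _ _) ?_
          have h1 : (C (mc k n l)).degree ≤ 0 := Polynomial.degree_C_le
          have h2 : (∏ j ∈ (Finset.range (n + 1)).erase l, (X - C ((j:ℝ)))).degree ≤ (n : WithBot ℕ) := by
            refine le_trans (Polynomial.degree_prod_le _ _) ?_
            refine le_trans (Finset.sum_le_card_nsmul _ _ 1 ?_) ?_
            · intro j _; exact le_of_eq (Polynomial.degree_X_sub_C _)
            · have hc : ((Finset.range (n+1)).erase l).card = n := by
                rw [Finset.card_erase_of_mem hl, Finset.card_range]; omega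
              rw [hc]; simp
          calc (C (mc k n l)).degree + (∏ j ∈ (Finset.range (n + 1)).erase l, (X - C ((j:ℝ)))).degree
              ≤ 0 + (n : WithBot ℕ) := add_le_add h1 h2
            _ = (n : WithBot ℕ) := zero_add _
      _ < ((n+1 : ℕ) : WithBot ℕ) := by exact_mod_cast Nat.lt_succ_self n
  have key : Q = P := by
    refine Polynomial.eq_of_degrees_lt_of_eval_finset_eq _ hQdeg hPdeg ?_
    intro x hx
    obtain ⟨l, hl, rfl⟩ := Finset.mem_image.1 hx
    have hQeval : Q.eval ((l:ℝ)) = mc k n l * ∏ j ∈ (Finset.range (n + 1)).erase l, ((l:ℝ) - j) := by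
      rw [hQ, Polynomial.eval_finset_sum]
      rw [Finset.sum_eq_single l]
      · simp [Polynomial.eval_prod]
      · intro b hb hbl
        have : (l:ℝ) ∈ ((Finset.range (n+1)).erase b).image (Nat.cast : ℕ → ℝ) := by
          exact Finset.mem_image_of_mem _ (Finset.mem_erase.2 ⟨Ne.symm hbl, hl⟩)
        simp only [Polynomial.eval_mul, Polynomial.eval_C, Polynomial.eval_prod,
          Polynomial.eval_sub, Polynomial.eval_X]
        rw [Finset.prod_eq_zero (Finset.mem_erase.2 ⟨Ne.symm hbl, hl⟩) (by simp), mul_zero]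
      · intro h; exact absurd hl h
    rw [hQeval, mc, div_mul_cancel₀ _ (mc_denom_ne n l hl)]
    rw [hP, Polynomial.eval_prod]
    refine Finset.prod_congr rfl fun j _ => by simp; ring
  have := congrArg (Polynomial.eval z) key
  rw [hQ, hP, Polynomial.eval_finset_sum, Polynomial.eval_prod] at this
  simp only [Polynomial.eval_mul, Polynomial.eval_C, Polynomial.eval_prod,
    Polynomial.eval_sub, Polynomial.eval_add, Polynomial.eval_X] at this
  rw [this]
  refine Finset.prod_congr rfl fun j _ => by ring

lemma prod_neg' (s : Finset ℕ) (f : ℕ → ℝ) :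
    ∏ j ∈ s, (-(f j)) = (-1 : ℝ) ^ s.card * ∏ j ∈ s, f j := by
  calc ∏ j ∈ s, (-(f j)) = ∏ j ∈ s, ((-1 : ℝ) * f j) :=
        Finset.prod_congr rfl fun j _ => (neg_one_mul _).symm
    _ = (-1 : ℝ) ^ s.card * ∏ j ∈ s, f j := by
        rw [Finset.prod_mul_distrib, Finset.prod_const]

lemma prod_cast_sub (n : ℕ) : ∏ j ∈ Finset.range n, ((n:ℝ) - j) = (Nat.factorial n : ℝ) := by
  have h1 : ∏ j ∈ Finset.range n, ((n:ℝ) - j) = ∏ j ∈ Finset.range n, (((n - j : ℕ) : ℝ)) := by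
    refine Finset.prod_congr rfl fun j hj => ?_
    have := Finset.mem_range.1 hj
    rw [Nat.cast_sub (le_of_lt this)]
  rw [h1, ← Nat.cast_prod]
  congr 1
  rw [← Finset.prod_range_reflect (fun j => n - j) n, ← Finset.prod_range_add_one_eq_factorial]
  exact Finset.prod_congr rfl fun j hj => by have := Finset.mem_range.1 hj; omega

lemma sum_mc_div (k n m : ℕ) (hm : m ∈ Finset.range (n + 1)) :
    ∑ l ∈ Finset.range (n + 1), mc k n l / ((l:ℝ) + m + k + 1) =
      if m = n then (Nat.factorial n : ℝ) / ∏ j ∈ Finset.range (n + 1), ((n:ℝ) + k + 1 + j)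
      else 0 := by
  set z : ℝ := -((m:ℝ) + k + 1) with hz
  set A : ℝ := ∏ j ∈ Finset.range (n + 1), (z - (j:ℝ)) with hA
  have hfac : ∀ j : ℕ, z - (j:ℝ) = -((m:ℝ) + k + 1 + j) := fun j => by rw [hz]; ring
  have hAne : A ≠ 0 := by
    rw [hA]
    refine Finset.prod_ne_zero_iff.2 fun j _ => ?_
    rw [hfac j]
    have : (0:ℝ) < (m:ℝ) + k + 1 + j := by positivity
    intro h; rw [neg_eq_zero] at h; linarith
  have hzl : ∀ l : ℕ, z - (l:ℝ) ≠ 0 := by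
    intro l
    rw [hfac l]
    have : (0:ℝ) < (m:ℝ) + k + 1 + l := by positivity
    intro h; rw [neg_eq_zero] at h; linarith
  have key := poly_key k n z
  have hrw : ∀ l ∈ Finset.range (n + 1),
      mc k n l * ∏ j ∈ (Finset.range (n + 1)).erase l, (z - (j:ℝ))
      = -A * (mc k n l / ((l:ℝ) + m + k + 1)) := by
    intro l hl
    have hp : (∏ j ∈ (Finset.range (n + 1)).erase l, (z - (j:ℝ))) * (z - (l:ℝ)) = A :=
      Finset.prod_erase_mul _ _ hl
    have hpe : (∏ j ∈ (Finset.range (n + 1)).erase l, (z - (j:ℝ))) = A / (z - (l:ℝ)) := by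
      field_simp [hzl l] at hp ⊢; linarith [hp]
    have hzl' : z - (l:ℝ) = -((l:ℝ) + m + k + 1) := by rw [hz]; ring
    have h1 : (l:ℝ) + m + k + 1 ≠ 0 := by positivity
    rw [hpe, hzl', div_neg, mul_neg, neg_mul]
    congr 1
    rw [mul_comm (mc k n l), div_mul_eq_mul_div, mul_div_assoc]
  rw [Finset.sum_congr rfl hrw, ← Finset.mul_sum] at key
  have hS : ∑ l ∈ Finset.range (n + 1), mc k n l / ((l:ℝ) + m + k + 1)
      = (∏ j ∈ Finset.range n, (z + j + k + 1)) / (-A) := by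
    rw [eq_div_iff (neg_ne_zero.2 hAne), mul_comm]
    exact key
  rw [hS]
  have hnum : ∀ j : ℕ, z + (j:ℝ) + k + 1 = (j:ℝ) - m := fun j => by rw [hz]; ring
  by_cases hmn : m = n
  · rw [if_pos hmn]
    have h1 : ∏ j ∈ Finset.range n, (z + (j:ℝ) + k + 1) = (-1:ℝ)^n * (Nat.factorial n : ℝ) := by
      calc ∏ j ∈ Finset.range n, (z + (j:ℝ) + k + 1)
          = ∏ j ∈ Finset.range n, (-(((n:ℝ)) - j)) := by
            refine Finset.prod_congr rfl fun j _ => by rw [hnum j, hmn]; ring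
        _ = (-1:ℝ)^n * (Nat.factorial n : ℝ) := by
            rw [prod_neg', Finset.card_range, prod_cast_sub]
    have h2 : A = (-1:ℝ)^(n+1) * ∏ j ∈ Finset.range (n + 1), ((n:ℝ) + k + 1 + j) := by
      rw [hA]
      calc ∏ j ∈ Finset.range (n+1), (z - (j:ℝ))
          = ∏ j ∈ Finset.range (n+1), (-(((n:ℝ)) + k + 1 + j)) := by
            refine Finset.prod_congr rfl fun j _ => by rw [hfac j, hmn]
        _ = _ := by rw [prod_neg', Finset.card_range]
    rw [h1, h2]
    have hPpos : (0:ℝ) < ∏ j ∈ Finset.range (n + 1), ((n:ℝ) + k + 1 + j) :=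
      Finset.prod_pos fun j _ => by positivity
    rcases Nat.even_or_odd n with he | ho
    · rw [he.neg_one_pow, (by simpa using he.add_one : Odd (n+1)).neg_one_pow]
      field_simp
    · rw [ho.neg_one_pow, (by simpa using ho.add_one : Even (n+1)).neg_one_pow]
      field_simp
  · rw [if_neg hmn]
    have hmlt : m < n := by
      have := Finset.mem_range.1 hm; omega
    have hzero : ∏ j ∈ Finset.range n, (z + (j:ℝ) + k + 1) = 0 := by
      refine Finset.prod_eq_zero (Finset.mem_range.2 hmlt) ?_
      rw [hnum m]; ring
    rw [hzero, zero_div]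

/-- the squared weighted `L²`-norm of the Müntz–Legendre polynomial:
`∫₀¹ (L_n^k(x))² x dx = 1 / (4n + 2k + 2)`. -/
theorem muntz_legendre_norm (k n : ℕ) :
    ∫ x in (0:ℝ)..1, (muntzLegendre k n x) ^ 2 * x = 1 / (4 * n + 2 * k + 2) := by
  have hexp : ∀ x : ℝ, (muntzLegendre k n x) ^ 2 * x =
      ∑ m ∈ Finset.range (n + 1), ∑ l ∈ Finset.range (n + 1),
        mc k n m * mc k n l * x ^ (2 * l + 2 * m + 2 * k + 1) := by
    intro x
    rw [muntzLegendre, sq, Finset.sum_mul_sum, Finset.sum_mul]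
    refine Finset.sum_congr rfl fun m _ => ?_
    rw [Finset.sum_mul]
    refine Finset.sum_congr rfl fun l _ => ?_
    show mc k n m * x ^ (2*m+k) * (mc k n l * x ^ (2*l+k)) * x = _
    rw [show 2*l+2*m+2*k+1 = (2*m+k) + (2*l+k) + 1 by ring]
    simp only [pow_add, pow_one]
    ring
  simp only [hexp]
  rw [intervalIntegral.integral_finset_sum]; swap
  · intro m _
    apply Continuous.intervalIntegrable
    continuity
  have hint : ∀ m ∈ Finset.range (n+1), (∫ x in (0:ℝ)..1, ∑ l ∈ Finset.range (n + 1),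
      mc k n m * mc k n l * x ^ (2 * l + 2 * m + 2 * k + 1))
      = mc k n m / 2 * ∑ l ∈ Finset.range (n+1), mc k n l / ((l:ℝ) + m + k + 1) := by
    intro m _
    rw [intervalIntegral.integral_finset_sum]; swap
    · intro l _
      apply Continuous.intervalIntegrable
      continuity
    rw [Finset.mul_sum]
    refine Finset.sum_congr rfl fun l _ => ?_
    rw [intervalIntegral.integral_const_mul, integral_pow]
    have hcast : ((2 * l + 2 * m + 2 * k + 1 : ℕ) : ℝ) + 1 = 2 * ((l:ℝ) + m + k + 1) := by
      push_cast; ring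
    rw [hcast]
    have h1 : ((l:ℝ) + m + k + 1) ≠ 0 := by positivity
    rw [one_pow, zero_pow (by omega), sub_zero]
    field_simp
  rw [Finset.sum_congr rfl hint]
  have : ∀ m ∈ Finset.range (n+1),
      mc k n m / 2 * ∑ l ∈ Finset.range (n+1), mc k n l / ((l:ℝ) + m + k + 1)
      = if m = n then mc k n n / 2 *
          ((Nat.factorial n : ℝ) / ∏ j ∈ Finset.range (n + 1), ((n:ℝ) + k + 1 + j)) else 0 := by
    intro m hm
    rw [sum_mc_div k n m hm]
    by_cases h : m = n
    · rw [if_pos h, if_pos h, h]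
    · rw [if_neg h, if_neg h, mul_zero]
  rw [Finset.sum_congr rfl this, Finset.sum_ite_eq' (Finset.range (n+1)) n,
    if_pos (Finset.self_mem_range_succ n)]
  -- now compute mc k n n
  have herase : (Finset.range (n+1)).erase n = Finset.range n := by
    rw [Finset.range_add_one, Finset.erase_insert (by simp)]
  have hden : (∏ j ∈ (Finset.range (n + 1)).erase n, ((n : ℝ) - j)) = (Nat.factorial n : ℝ) := by
    rw [herase]
    -- prod_cast_sub
    have h1 : ∏ j ∈ Finset.range n, ((n:ℝ) - j) = ∏ j ∈ Finset.range n, (((n - j : ℕ) : ℝ)) := by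
      refine Finset.prod_congr rfl fun j hj => ?_
      have := Finset.mem_range.1 hj
      rw [Nat.cast_sub (le_of_lt this)]
    rw [h1, ← Nat.cast_prod]
    congr 1
    rw [← Finset.prod_range_reflect (fun j => n - j) n, ← Finset.prod_range_add_one_eq_factorial]
    exact Finset.prod_congr rfl fun j hj => by have := Finset.mem_range.1 hj; omega
  have hmc : mc k n n = (∏ j ∈ Finset.range n, ((n : ℝ) + k + 1 + j)) / (Nat.factorial n : ℝ) := by
    rw [mc, hden]
    congr 1
    exact Finset.prod_congr rfl fun j _ => by ring
  rw [hmc, Finset.prod_range_succ]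
  set N : ℝ := ∏ j ∈ Finset.range n, ((n : ℝ) + k + 1 + j) with hN
  have hNpos : 0 < N := Finset.prod_pos fun j _ => by positivity
  have hfpos : (0:ℝ) < (Nat.factorial n : ℝ) := by exact_mod_cast Nat.factorial_pos n
  have hlast : (0:ℝ) < (n:ℝ) + k + 1 + n := by positivity
  field_simp
  ring
end

section
/- Fix k ∈ ℕ. The polynomials L_n^k are orthogonal in the weighted space L²([0,1], x dx): for all n ≠ m, ∫₀¹ L_n^k(x) L_m^k(x) x dx = 0; moreover, for every n ≥ 1 and every l with 0 ≤ l ≤ n−1, ∫₀¹ L_n^k(x) x^{2l+k} x dx = 0. -/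
open MeasureTheory Finset

section Aux
open Polynomial

private lemma key (n : ℕ) (F : Polynomial ℝ) (hF : F.degree < n) :
    ∑ l ∈ Finset.range (n+1),
      F.eval (l : ℝ) * (∏ j ∈ (Finset.range (n+1)).erase l, ((l:ℝ) - j))⁻¹ = 0 := by
  set s := Finset.range (n+1) with hs
  set v : ℕ → ℝ := fun i => (i : ℝ) with hv
  have hvs : Set.InjOn v s := fun a _ b _ h => Nat.cast_injective h
  have hcard : s.card = n + 1 := Finset.card_range _
  have hdeg : F.degree < (s.card : WithBot ℕ) := by
    rw [hcard]
    exact hF.trans_le (by exact_mod_cast WithBot.coe_le_coe.mpr (Nat.le_succ n))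
  have h1 : F = Lagrange.interpolate s v (fun i => F.eval (v i)) :=
    Lagrange.eq_interpolate hvs hdeg
  have hbasis : ∀ l ∈ s, (Lagrange.basis s v l).coeff n
      = (∏ j ∈ s.erase l, (v l - v j))⁻¹ := by
    intro l hl
    have : Lagrange.basis s v l
        = Polynomial.C (∏ j ∈ s.erase l, (v l - v j)⁻¹) * Lagrange.nodal (s.erase l) v := by
      simp only [Lagrange.basis, Lagrange.basisDivisor, Lagrange.nodal_eq]
      rw [Finset.prod_mul_distrib, map_prod]
    rw [this, Polynomial.coeff_C_mul]
    have hmon : (Lagrange.nodal (s.erase l) v).Monic := Lagrange.nodal_monic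
    have hnd : (Lagrange.nodal (s.erase l) v).natDegree = n := by
      rw [Lagrange.natDegree_nodal, Finset.card_erase_of_mem hl, hcard]
      omega
    rw [← hnd, hmon.coeff_natDegree, mul_one, Finset.prod_inv_distrib]
  have h2 := congrArg (fun p => Polynomial.coeff p n) h1
  simp only [Lagrange.interpolate_apply, Polynomial.finset_sum_coeff,
    Polynomial.coeff_C_mul] at h2
  rw [Polynomial.coeff_eq_zero_of_degree_lt hF] at h2
  rw [Finset.sum_congr rfl (fun l hl => by rw [hbasis l hl])] at h2
  exact h2.symm

private lemma core (k n m : ℕ) (hm : m < n) :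
    ∑ l ∈ Finset.range (n+1),
      ((∏ j ∈ Finset.range n, ((l : ℝ) + j + k + 1)) /
        (∏ j ∈ (Finset.range (n+1)).erase l, ((l : ℝ) - j))) * ((l:ℝ) + m + k + 1)⁻¹ = 0 := by
  set F : Polynomial ℝ := ∏ j ∈ (Finset.range n).erase m, (X + C ((j:ℝ) + k + 1)) with hFdef
  have hFdeg : F.degree < n := by
    have h1 : F.natDegree ≤ ((Finset.range n).erase m).card := by
      refine (Polynomial.natDegree_prod_le _ _).trans ?_
      have := Finset.sum_le_sum (s := (Finset.range n).erase m)
        (f := fun j => (X + C ((j:ℝ) + k + 1)).natDegree) (g := fun _ => 1)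
        (fun j _ => le_of_eq (Polynomial.natDegree_X_add_C _))
      simpa using this
    have h2 : ((Finset.range n).erase m).card = n - 1 := by
      rw [Finset.card_erase_of_mem (Finset.mem_range.mpr hm), Finset.card_range]
    have h3 : F.degree ≤ ((n - 1 : ℕ) : WithBot ℕ) :=
      Polynomial.degree_le_natDegree.trans (Nat.cast_le.mpr (h1.trans_eq h2))
    refine h3.trans_lt ?_
    exact_mod_cast (by omega : n - 1 < n)
  have := key n F hFdeg
  rw [← this]
  refine Finset.sum_congr rfl fun l hl => ?_
  have heval : F.eval (l : ℝ) = ∏ j ∈ (Finset.range n).erase m, ((l:ℝ) + j + k + 1) := by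
    simp only [hFdef, Polynomial.eval_prod, Polynomial.eval_add, Polynomial.eval_X,
      Polynomial.eval_C]
    exact Finset.prod_congr rfl fun j _ => by ring
  have hsplit : (∏ j ∈ Finset.range n, ((l : ℝ) + j + k + 1))
      = ((l:ℝ) + m + k + 1) * ∏ j ∈ (Finset.range n).erase m, ((l:ℝ) + j + k + 1) :=
    (Finset.mul_prod_erase _ _ (Finset.mem_range.mpr hm)).symm
  have hne : ((l:ℝ) + m + k + 1) ≠ 0 := by positivity
  rw [heval, hsplit, div_eq_mul_inv]
  have : ((l:ℝ) + m + k + 1) * (∏ j ∈ (Finset.range n).erase m, ((l:ℝ) + j + k + 1)) *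
      (∏ j ∈ (Finset.range (n+1)).erase l, ((l:ℝ) - j))⁻¹ * ((l:ℝ) + m + k + 1)⁻¹
      = (∏ j ∈ (Finset.range n).erase m, ((l:ℝ) + j + k + 1)) *
        (∏ j ∈ (Finset.range (n+1)).erase l, ((l:ℝ) - j))⁻¹ *
        (((l:ℝ) + m + k + 1) * ((l:ℝ) + m + k + 1)⁻¹) := by ring
  rw [this, mul_inv_cancel₀ hne, mul_one]

end Aux

private lemma part2 (k n m : ℕ) (hm : m < n) :
    ∫ x in (0:ℝ)..1, muntzLegendre k n x * x ^ (2 * m + k) * x = 0 := by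
  set c : ℕ → ℝ := fun l => (∏ j ∈ Finset.range n, ((l : ℝ) + j + k + 1)) /
      (∏ j ∈ (Finset.range (n + 1)).erase l, ((l : ℝ) - j)) with hc
  have hfun : ∀ x : ℝ, muntzLegendre k n x * x ^ (2 * m + k) * x
      = ∑ l ∈ Finset.range (n+1), c l * x ^ (2*l + 2*m + 2*k + 1) := by
    intro x
    rw [muntzLegendre, Finset.sum_mul, Finset.sum_mul]
    refine Finset.sum_congr rfl fun l _ => ?_
    rw [show 2*l + 2*m + 2*k + 1 = (2*l + k) + (2*m + k) + 1 by ring]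
    ring
  simp_rw [hfun]
  rw [intervalIntegral.integral_finset_sum (fun l _ => (by fun_prop :
      Continuous fun x : ℝ => c l * x ^ (2*l + 2*m + 2*k + 1)).intervalIntegrable 0 1)]
  have hint : ∀ l : ℕ, ∫ x in (0:ℝ)..1, c l * x ^ (2*l + 2*m + 2*k + 1)
      = c l * ((l:ℝ) + m + k + 1)⁻¹ * (1/2) := by
    intro l
    rw [intervalIntegral.integral_const_mul, integral_pow]
    have h2 : ((2*l + 2*m + 2*k + 1 : ℕ) : ℝ) + 1 = 2 * ((l:ℝ) + m + k + 1) := by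
      push_cast; ring
    rw [h2]
    simp only [one_pow, ne_eq]
    rw [zero_pow (by omega), sub_zero, div_eq_mul_inv, mul_inv]
    ring
  simp_rw [hint]
  rw [← Finset.sum_mul, core k n m hm, zero_mul]

private lemma muntz_cont (k n : ℕ) : Continuous (muntzLegendre k n) := by
  unfold muntzLegendre; fun_prop

private lemma part1 (k n m : ℕ) (h : m < n) :
    ∫ x in (0:ℝ)..1, muntzLegendre k n x * muntzLegendre k m x * x = 0 := by
  set c : ℕ → ℝ := fun l => (∏ j ∈ Finset.range m, ((l : ℝ) + j + k + 1)) /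
      (∏ j ∈ (Finset.range (m + 1)).erase l, ((l : ℝ) - j)) with hc
  have hfun : ∀ x : ℝ, muntzLegendre k n x * muntzLegendre k m x * x
      = ∑ l ∈ Finset.range (m+1), c l * (muntzLegendre k n x * x ^ (2*l + k) * x) := by
    intro x
    rw [show muntzLegendre k m x = ∑ l ∈ Finset.range (m+1), c l * x ^ (2*l+k) from rfl,
      Finset.mul_sum, Finset.sum_mul]
    exact Finset.sum_congr rfl fun l _ => by ring
  simp_rw [hfun]
  rw [intervalIntegral.integral_finset_sum (fun l _ => (by
      have := muntz_cont k n; fun_prop :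
      Continuous fun x : ℝ => c l * (muntzLegendre k n x * x ^ (2*l + k) * x)).intervalIntegrable 0 1)]
  refine Finset.sum_eq_zero fun l hl => ?_
  rw [intervalIntegral.integral_const_mul, part2 k n l (by
    have := Finset.mem_range.mp hl; omega), mul_zero]

/-- orthogonality of the Müntz–Legendre polynomials in `L²([0,1], x dx)`:
distinct polynomials are orthogonal, and `L_n^k` is orthogonal to every monomial
`x^{2l+k}` with `0 ≤ l ≤ n - 1`. -/
theorem muntz_legendre_orthogonal (k : ℕ) :
    (∀ n m : ℕ, n ≠ m →
      ∫ x in (0:ℝ)..1, muntzLegendre k n x * muntzLegendre k m x * x = 0)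
    ∧ (∀ n : ℕ, 1 ≤ n → ∀ l : ℕ, l ≤ n - 1 →
      ∫ x in (0:ℝ)..1, muntzLegendre k n x * x ^ (2 * l + k) * x = 0) := by
  constructor
  · intro n m hne
    rcases Nat.lt_or_ge m n with h | h
    · exact part1 k n m h
    · have h' : n < m := by omega
      simp_rw [mul_comm (muntzLegendre k n _) (muntzLegendre k m _)]
      exact part1 k m n h'
  · intro n hn l hl
    exact part2 k n l (by omega)
end

section
/- Let D = {z ∈ ℂ : |z| < 1} be the open unit disk and D_h = {z ∈ D : Im z > 0} the open upper half disk. Let ψ : D_h → D be a holomorphic bijection with holomorphic inverse g : D → D_h (so g is holomorphic on D, ψ(g(z)) = z for z ∈ D and g(ψ(w)) = w for w ∈ D_h). Let γ ∈ L²(D) and suppose there is a constant M such that |g′(z)| ≤ M for almost every z ∈ D with γ(z) ≠ 0. If ∫_D γ(z) ⟨∇(Im(g(z)^n)), ∇(Im(g(z)^k))⟩ dz = 0 for all integers n, k ≥ 1, then γ = 0 almost everywhere on D. In other words, a conductivity perturbation (vanishing near the inaccessible boundary region) is uniquely determined by the linearized incomplete Dirichlet-to-Neumann data generated by the harmonic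 functions Im(g(·)^n), which vanish on the part of the boundary outside the accessible arc. -/
open MeasureTheory Real
open scoped RealInnerProductSpace

open Complex Metric
open scoped ComplexConjugate BoundedContinuousFunction Topology

/-!
Put `ρ = γ |g'|²`. By the chain rule `⟨∇ Im g^(a+1), ∇ Im g^(b+1)⟩ = (a+1)(b+1) |g'|² Re(g^a ḡ^b)`,
so the hypothesis says that every moment `∫_D ρ Re(g^a ḡ^b)` vanishes. Push the measures
`ρ⁺ dz` and `ρ⁻ dz` forward by `g`: this gives two finite measures on the closed upper half disk
with equal integrals against every `Re(w^a w̄^b)`. These functions span an algebra which, on the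
closed upper half plane, separates points (`Re w` and `|w|²` already do), so by Stone–Weierstrass
the two push-forwards coincide. Since `g` has the measurable left inverse `ψ`, pushing forward by
`g` is injective, whence `ρ⁺ = ρ⁻` a.e., i.e. `ρ = 0` a.e. Finally `g'` never vanishes because
`ψ ∘ g = id`, so `γ = 0` a.e.
-/

def reMonomial (a b : ℕ) (w : ℂ) : ℝ := (w ^ a * conj w ^ b).re

theorem continuous_reMonomial (a b : ℕ) : Continuous (reMonomial a b) :=
  continuous_re.comp ((continuous_pow a).mul (continuous_conj.pow b))

theorem reMonomial_mul_reMonomial (a b c d : ℕ) (w : ℂ) :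
    reMonomial a b w * reMonomial c d w =
      (reMonomial (a + c) (b + d) w + reMonomial (a + d) (b + c) w) / 2 := by
  simp only [reMonomial, pow_add]
  set x := w ^ a * conj w ^ b
  set y := w ^ c * conj w ^ d
  have hx : w ^ a * w ^ c * (conj w ^ b * conj w ^ d) = x * y := by ring
  have hy : w ^ a * w ^ d * (conj w ^ b * conj w ^ c) = x * conj y := by
    simp only [y, map_mul, map_pow, conj_conj]; ring
  rw [hx, hy]
  simp only [mul_re, conj_re, conj_im]
  ring

theorem eq_of_reMonomial_eq {z w : ℂ} (hz : 0 ≤ z.im) (hw : 0 ≤ w.im)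
    (h₁₀ : reMonomial 1 0 z = reMonomial 1 0 w) (h₁₁ : reMonomial 1 1 z = reMonomial 1 1 w) :
    z = w := by
  simp only [reMonomial, pow_one, pow_zero, mul_one, mul_conj, ofReal_re,
    normSq_apply] at h₁₀ h₁₁
  refine Complex.ext h₁₀ ?_
  rw [h₁₀] at h₁₁
  nlinarith [sq_nonneg (z.im - w.im), sq_nonneg (z.im + w.im)]

section ReMonomialAlgebra

variable {K : Set ℂ} [CompactSpace K]

noncomputable def reMonomialBCF (K : Set ℂ) [CompactSpace K] (a b : ℕ) : K →ᵇ ℝ :=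
  .mkOfCompact ⟨fun w => reMonomial a b w, (continuous_reMonomial a b).comp continuous_subtype_val⟩

theorem reMonomialBCF_apply (a b : ℕ) (w : K) : reMonomialBCF K a b w = reMonomial a b w := rfl

theorem reMonomialBCF_mul (a b c d : ℕ) :
    reMonomialBCF K a b * reMonomialBCF K c d =
      (1 / 2 : ℝ) • (reMonomialBCF K (a + c) (b + d) + reMonomialBCF K (a + d) (b + c)) := by
  ext w
  simp only [BoundedContinuousFunction.coe_mul, Pi.mul_apply, BoundedContinuousFunction.coe_smul,
    BoundedContinuousFunction.coe_add, Pi.add_apply, smul_eq_mul, reMonomialBCF_apply,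
    reMonomial_mul_reMonomial]
  ring

theorem reMonomialBCF_zero_zero : reMonomialBCF K 0 0 = 1 := by
  ext; simp [reMonomialBCF_apply, reMonomial]

noncomputable def reMonomialSpan (K : Set ℂ) [CompactSpace K] : Submodule ℝ (K →ᵇ ℝ) :=
  Submodule.span ℝ (Set.range fun p : ℕ × ℕ => reMonomialBCF K p.1 p.2)

theorem reMonomialBCF_mem_reMonomialSpan (a b : ℕ) : reMonomialBCF K a b ∈ reMonomialSpan K :=
  Submodule.subset_span ⟨(a, b), rfl⟩

theorem mul_mem_reMonomialSpan {f f' : K →ᵇ ℝ} (hf : f ∈ reMonomialSpan K)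
    (hf' : f' ∈ reMonomialSpan K) : f * f' ∈ reMonomialSpan K := by
  have := Submodule.mul_mem_mul hf hf'
  rw [reMonomialSpan, Submodule.span_mul_span] at this
  refine Submodule.span_le.mpr ?_ this
  rintro _ ⟨_, ⟨⟨a, b⟩, rfl⟩, _, ⟨⟨c, d⟩, rfl⟩, rfl⟩
  simp only [SetLike.mem_coe, reMonomialBCF_mul]
  exact Submodule.smul_mem _ _ (Submodule.add_mem _ (reMonomialBCF_mem_reMonomialSpan _ _)
    (reMonomialBCF_mem_reMonomialSpan _ _))

-- The star structure on `K →ᵇ ℝ` is trivial; it is asked for by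
-- `ext_of_forall_mem_subalgebra_integral_eq_of_polish`.
noncomputable def reMonomialAlgebra (K : Set ℂ) [CompactSpace K] : StarSubalgebra ℝ (K →ᵇ ℝ) :=
  { (reMonomialSpan K).toSubalgebra
      (reMonomialBCF_zero_zero (K := K) ▸ reMonomialBCF_mem_reMonomialSpan 0 0)
      (fun _ _ => mul_mem_reMonomialSpan) with
    star_mem' := fun {f} hf => by
      convert hf using 1
      ext; exact star_trivial _ }

theorem reMonomialAlgebra_separatesPoints (him : ∀ w ∈ K, 0 ≤ w.im) :
    ((reMonomialAlgebra K).map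
      (BoundedContinuousFunction.toContinuousMapStarₐ ℝ)).SeparatesPoints := by
  intro z w hzw
  have hmem : ∀ a b, ⇑(reMonomialBCF K a b) ∈ (fun f : C(K, ℝ) => ⇑f) ''
      ((reMonomialAlgebra K).map (BoundedContinuousFunction.toContinuousMapStarₐ ℝ) :
        Set C(K, ℝ)) :=
    fun a b => ⟨_, ⟨reMonomialBCF K a b, reMonomialBCF_mem_reMonomialSpan a b, rfl⟩, rfl⟩
  by_contra! h
  exact hzw (Subtype.ext (eq_of_reMonomial_eq (him z z.2) (him w w.2)
    (h _ (hmem 1 0)) (h _ (hmem 1 1))))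

theorem ext_of_forall_integral_reMonomial_eq (him : ∀ w ∈ K, 0 ≤ w.im)
    {P P' : Measure ℂ} [IsFiniteMeasure P] [IsFiniteMeasure P']
    (hP : ∀ᵐ w ∂P, w ∈ K) (hP' : ∀ᵐ w ∂P', w ∈ K)
    (h : ∀ a b, ∫ w, reMonomial a b w ∂P = ∫ w, reMonomial a b w ∂P') : P = P' := by
  have hKm : MeasurableSet K := (isCompact_iff_compactSpace.mpr ‹_›).isClosed.measurableSet
  have integral_comap_eq : ∀ Q : Measure ℂ, (∀ᵐ w ∂Q, w ∈ K) → ∀ f : ℂ → ℝ,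
      ∫ x : K, f x ∂(Measure.comap Subtype.val Q) = ∫ w, f w ∂Q := fun Q hQ f => by
    rw [integral_subtype_comap hKm, Measure.restrict_eq_self_of_ae_mem hQ]
  rw [← Measure.restrict_eq_self_of_ae_mem hP, ← Measure.restrict_eq_self_of_ae_mem hP',
    ← map_comap_subtype_coe hKm, ← map_comap_subtype_coe hKm]
  congr 1
  refine ext_of_forall_mem_subalgebra_integral_eq_of_polish
    (reMonomialAlgebra_separatesPoints him) fun f hf => ?_
  replace hf : f ∈ Submodule.span ℝ (Set.range fun p : ℕ × ℕ => reMonomialBCF K p.1 p.2) := hf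
  induction hf using Submodule.span_induction with
  | mem f hf =>
    obtain ⟨⟨a, b⟩, rfl⟩ := hf
    simpa only [reMonomialBCF_apply, integral_comap_eq _ hP, integral_comap_eq _ hP'] using h a b
  | zero => simp
  | add f f' _ _ hf hf' =>
    simp only [BoundedContinuousFunction.coe_add, Pi.add_apply]
    rw [integral_add, integral_add, hf, hf'] <;> exact BoundedContinuousFunction.integrable _ _
  | smul r f _ hf => simp only [BoundedContinuousFunction.coe_smul, integral_smul, hf]

end ReMonomialAlgebra

section PushforwardOfDensity

variable {α β : Type*} [MeasurableSpace α] [MeasurableSpace β] {μ ν : Measure α} {φ : α → β}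

theorem ae_mem_map_of_absolutelyContinuous (hνμ : ν ≪ μ) (hφ : AEMeasurable φ μ) {s : Set β}
    (hs : MeasurableSet s) (h : ∀ᵐ x ∂μ, φ x ∈ s) : ∀ᵐ y ∂ν.map φ, y ∈ s :=
  (ae_map_iff (hφ.mono_ac hνμ) hs).mpr (hνμ.ae_le h)

theorem map_map_eq_self_of_ae_leftInverse (hνμ : ν ≪ μ) (hφ : AEMeasurable φ μ) {ψ : β → α}
    (hψ : Measurable ψ) (hψφ : ∀ᵐ x ∂μ, ψ (φ x) = x) : (ν.map φ).map ψ = ν := by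
  rw [AEMeasurable.map_map_of_aemeasurable hψ.aemeasurable (hφ.mono_ac hνμ),
    Measure.map_congr (hνμ.ae_le hψφ : ψ ∘ φ =ᵐ[ν] id), Measure.map_id]

theorem integral_map_withDensity_ofReal {f : α → ℝ} (hf : AEMeasurable f μ)
    (hφ : AEMeasurable φ μ) {F : β → ℝ} (hF : Measurable F) :
    ∫ y, F y ∂(μ.withDensity fun x => ENNReal.ofReal (f x)).map φ
      = ∫ x, max (f x) 0 * F (φ x) ∂μ := by
  rw [integral_map (hφ.mono_ac (withDensity_absolutelyContinuous _ _)) hF.aestronglyMeasurable,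
    integral_withDensity_eq_integral_toReal_smul₀ hf.ennreal_ofReal
      (ae_of_all _ fun _ => ENNReal.ofReal_lt_top)]
  simp only [ENNReal.toReal_ofReal', smul_eq_mul]

theorem integral_map_withDensity_ofReal_sub_neg {f : α → ℝ} (hf : Integrable f μ)
    (hφ : AEMeasurable φ μ) {F : β → ℝ} (hF : Measurable F) {C : ℝ}
    (hFC : ∀ᵐ x ∂μ, ‖F (φ x)‖ ≤ C) :
    ∫ y, F y ∂(μ.withDensity fun x => ENNReal.ofReal (f x)).map φ
      - ∫ y, F y ∂(μ.withDensity fun x => ENNReal.ofReal (-f x)).map φ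
      = ∫ x, f x * F (φ x) ∂μ := by
  have hFφ : AEStronglyMeasurable (fun x => F (φ x)) μ :=
    (hF.comp_aemeasurable hφ).aestronglyMeasurable
  have hf' : Integrable (fun x => -f x) μ := hf.neg
  rw [integral_map_withDensity_ofReal hf.1.aemeasurable hφ hF,
    integral_map_withDensity_ofReal hf'.1.aemeasurable hφ hF,
    ← integral_sub (hf.pos_part.mul_bdd hFφ hFC) (hf'.pos_part.mul_bdd hFφ hFC)]
  simp only [← sub_mul, max_zero_sub_max_neg_zero_eq_self]

theorem ae_eq_zero_of_map_withDensity_ofReal_eq {f : α → ℝ} (hf : Integrable f μ)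
    (hφ : AEMeasurable φ μ) {ψ : β → α} (hψ : Measurable ψ) (hψφ : ∀ᵐ x ∂μ, ψ (φ x) = x)
    (h : (μ.withDensity fun x => ENNReal.ofReal (f x)).map φ
      = (μ.withDensity fun x => ENNReal.ofReal (-f x)).map φ) :
    f =ᵐ[μ] 0 := by
  have hdens := congrArg (Measure.map ψ) h
  simp only [map_map_eq_self_of_ae_leftInverse (withDensity_absolutelyContinuous _ _) hφ hψ hψφ]
    at hdens
  have hf' : Integrable (fun x => -f x) μ := hf.neg
  rw [withDensity_eq_iff hf.1.aemeasurable.ennreal_ofReal hf'.1.aemeasurable.ennreal_ofReal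
    ((lintegral_ofReal_le_lintegral_enorm f).trans_lt hf.2).ne] at hdens
  filter_upwards [hdens] with x hx
  rcases le_total 0 (f x) with hx0 | hx0
  · rw [ENNReal.ofReal_of_nonpos (neg_nonpos.mpr hx0), ENNReal.ofReal_eq_zero] at hx
    exact le_antisymm hx hx0
  · rw [ENNReal.ofReal_of_nonpos hx0, eq_comm, ENNReal.ofReal_eq_zero] at hx
    exact le_antisymm hx0 (neg_nonpos.mp hx)

end PushforwardOfDensity

theorem ae_eq_zero_of_forall_integral_mul_reMonomial_eq_zero {α : Type*} [MeasurableSpace α]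
    {μ : Measure α} {K : Set ℂ} (hK : IsCompact K) (him : ∀ w ∈ K, 0 ≤ w.im)
    {ρ : α → ℝ} (hρ : Integrable ρ μ) {φ : α → ℂ} (hφ : AEMeasurable φ μ)
    (hφK : ∀ᵐ x ∂μ, φ x ∈ K) {ψ : ℂ → α} (hψ : Measurable ψ) (hψφ : ∀ᵐ x ∂μ, ψ (φ x) = x)
    (h : ∀ a b, ∫ x, ρ x * reMonomial a b (φ x) ∂μ = 0) : ρ =ᵐ[μ] 0 := by
  have : CompactSpace K := isCompact_iff_compactSpace.mp hK
  have := isFiniteMeasure_withDensity_ofReal hρ.2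
  have := isFiniteMeasure_withDensity_ofReal hρ.neg.2
  have hφK' : ∀ d, ∀ᵐ w ∂(μ.withDensity d).map φ, w ∈ K := fun d =>
    ae_mem_map_of_absolutelyContinuous (withDensity_absolutelyContinuous _ _) hφ
      hK.isClosed.measurableSet hφK
  refine ae_eq_zero_of_map_withDensity_ofReal_eq hρ hφ hψ hψφ <|
    ext_of_forall_integral_reMonomial_eq him (hφK' _) (hφK' _) fun a b => ?_
  obtain ⟨C, hC⟩ := hK.exists_bound_of_continuousOn (continuous_reMonomial a b).continuousOn
  rw [← sub_eq_zero, integral_map_withDensity_ofReal_sub_neg hρ hφ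
    (continuous_reMonomial a b).measurable (hφK.mono fun x hx => hC _ hx), h]

theorem Integrable.mul_normSq_deriv {μ : Measure ℂ} {γ : ℂ → ℝ} (hγ : Integrable γ μ)
    {g : ℂ → ℂ} {M : ℝ} (hM : ∀ᵐ z ∂μ, γ z ≠ 0 → ‖deriv g z‖ ≤ M) :
    Integrable (fun z => γ z * normSq (deriv g z)) μ := by
  refine (hγ.norm.const_mul (M ^ 2)).mono' (hγ.1.mul
    (continuous_normSq.measurable.comp (measurable_deriv g)).aestronglyMeasurable) ?_
  filter_upwards [hM] with z hz
  rw [norm_mul, Real.norm_of_nonneg (normSq_nonneg _), mul_comm,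
    normSq_eq_norm_sq]
  rcases eq_or_ne (γ z) 0 with h0 | h0
  · simp [h0]
  · exact mul_le_mul_of_nonneg_right (pow_le_pow_left₀ (norm_nonneg _) (hz h0) 2) (norm_nonneg _)

theorem deriv_ne_zero_of_eventually_leftInverse {𝕜 : Type*} [NontriviallyNormedField 𝕜]
    {f g : 𝕜 → 𝕜} {z : 𝕜} (hf : DifferentiableAt 𝕜 f z) (hg : DifferentiableAt 𝕜 g (f z))
    (hgf : ∀ᶠ w in 𝓝 z, g (f w) = w) : deriv f z ≠ 0 :=
  right_ne_zero_of_mul_eq_one <|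
    (hg.hasDerivAt.comp z hf.hasDerivAt).unique ((hasDerivAt_id z).congr_of_eventuallyEq hgf)

section Gradients

theorem hasGradientAt_im_comp {f : ℂ → ℂ} {z d : ℂ} (hf : HasDerivAt f d z) :
    HasGradientAt (fun w => (f w).im) (I * conj d) z := by
  rw [hasGradientAt_iff_hasFDerivAt]
  refine (imCLM.hasFDerivAt.comp z (hf.hasFDerivAt.restrictScalars ℝ)).congr_fderiv
    (ContinuousLinearMap.ext fun v => ?_)
  simp [InnerProductSpace.toDual_apply_apply, Complex.inner, mul_re, mul_im]
  ring

theorem inner_I_mul_conj (a b : ℂ) : ⟪I * conj a, I * conj b⟫ = (a * conj b).re := by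
  rw [Complex.inner, mul_comm (I * conj b)]
  congr 1
  simp only [map_mul, conj_I, conj_conj]
  ring_nf
  rw [I_sq]
  ring

theorem inner_gradient_im_pow_succ {f : ℂ → ℂ} {z d : ℂ} (hf : HasDerivAt f d z) (n k : ℕ) :
    ⟪gradient (fun w => (f w ^ (n + 1)).im) z, gradient (fun w => (f w ^ (k + 1)).im) z⟫
      = (n + 1) * (k + 1) * (normSq d * reMonomial n k (f z)) := by
  rw [(hasGradientAt_im_comp (hf.fun_pow (n + 1))).gradient,
    (hasGradientAt_im_comp (hf.fun_pow (k + 1))).gradient, inner_I_mul_conj]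
  have : ↑(n + 1) * f z ^ (n + 1 - 1) * d * conj (↑(k + 1) * f z ^ (k + 1 - 1) * d)
      = (((n + 1) * (k + 1) * normSq d : ℝ) : ℂ) * (f z ^ n * conj (f z) ^ k) := by
    simp only [Nat.add_sub_cancel, map_mul, map_pow, map_natCast]
    push_cast
    rw [← mul_conj]
    ring
  rw [this, re_ofReal_mul, reMonomial]
  ring

theorem setIntegral_mul_normSq_deriv_mul_reMonomial_eq_zero {s : Set ℂ} (hs : IsOpen s)
    {f : ℂ → ℂ} (hf : DifferentiableOn ℂ f s) {γ : ℂ → ℝ} {a b : ℕ}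
    (h : ∫ z in s, γ z * ⟪gradient (fun w => (f w ^ (a + 1)).im) z,
      gradient (fun w => (f w ^ (b + 1)).im) z⟫ = 0) :
    ∫ z in s, γ z * normSq (deriv f z) * reMonomial a b (f z) = 0 := by
  rw [setIntegral_congr_fun hs.measurableSet (g := fun z =>
      (a + 1) * (b + 1) * (γ z * normSq (deriv f z) * reMonomial a b (f z))) fun z hz => by
    simp only [inner_gradient_im_pow_succ
      (hf.differentiableAt (hs.mem_nhds hz)).hasDerivAt]
    ring, integral_const_mul] at h
  exact (mul_eq_zero.mp h).resolve_left (by positivity)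

end Gradients

theorem linearized_EIT_partial_boundary_uniqueness_general
    (ψ g : ℂ → ℂ)
    (hψ : DifferentiableOn ℂ ψ {z : ℂ | ‖z‖ < 1 ∧ 0 < z.im})
    (hg : DifferentiableOn ℂ g (Metric.ball (0:ℂ) 1))
    (hgmaps : Set.MapsTo g (Metric.ball (0:ℂ) 1) {z : ℂ | ‖z‖ < 1 ∧ 0 < z.im})
    (hψg : ∀ z ∈ Metric.ball (0:ℂ) 1, ψ (g z) = z)
    (γ : ℂ → ℝ)
    (hγ : MemLp γ 2 (volume.restrict (Metric.ball (0:ℂ) 1)))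
    (M : ℝ)
    (hM : ∀ᵐ z ∂(volume.restrict (Metric.ball (0:ℂ) 1)),
      γ z ≠ 0 → ‖deriv g z‖ ≤ M)
    (h : ∀ n k : ℕ, 1 ≤ n → 1 ≤ k →
      (∫ z in Metric.ball (0:ℂ) 1,
        γ z * ⟪gradient (fun w : ℂ => ((g w) ^ n).im) z,
               gradient (fun w : ℂ => ((g w) ^ k).im) z⟫) = 0) :
    ∀ᵐ z ∂(volume.restrict (Metric.ball (0:ℂ) 1)), γ z = 0 := by
  set D := ball (0 : ℂ) 1
  set Dh := {z : ℂ | ‖z‖ < 1 ∧ 0 < z.im}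
  have hDh : IsOpen Dh :=
    (isOpen_lt continuous_norm continuous_const).inter (isOpen_lt continuous_const continuous_im)
  have hD : ∀ᵐ z ∂volume.restrict D, z ∈ D := ae_restrict_mem measurableSet_ball
  have : IsFiniteMeasure (volume.restrict D) := isFiniteMeasure_restrict.mpr measure_ball_lt_top.ne
  have hρ : (fun z => γ z * normSq (deriv g z)) =ᵐ[volume.restrict D] 0 :=
    ae_eq_zero_of_forall_integral_mul_reMonomial_eq_zero (K := closedBall 0 1 ∩ {w | 0 ≤ w.im})
      ((isCompact_closedBall 0 1).inter_right (isClosed_le continuous_const continuous_im))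
      (fun w hw => hw.2) (Integrable.mul_normSq_deriv (hγ.integrable one_le_two) hM)
      (hg.continuousOn.aemeasurable measurableSet_ball)
      (hD.mono fun z hz => ⟨mem_closedBall_zero_iff.mpr (hgmaps hz).1.le, (hgmaps hz).2.le⟩)
      (hψ.continuousOn.measurable_piecewise (continuousOn_const (c := 0)) hDh.measurableSet)
      (hD.mono fun z hz => by rw [Set.piecewise_eq_of_mem _ _ _ (hgmaps hz), hψg z hz])
      fun a b => setIntegral_mul_normSq_deriv_mul_reMonomial_eq_zero isOpen_ball hg
        (h (a + 1) (b + 1) (by omega) (by omega))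
  filter_upwards [hρ, hD] with z hρz hz
  have hg'z : deriv g z ≠ 0 := deriv_ne_zero_of_eventually_leftInverse
    (hg.differentiableAt (isOpen_ball.mem_nhds hz)) (hψ.differentiableAt (hDh.mem_nhds (hgmaps hz)))
    (Filter.eventually_of_mem (isOpen_ball.mem_nhds hz) hψg)
  exact (mul_eq_zero.mp hρz).resolve_right (normSq_eq_zero.not.mpr hg'z)

/-- uniqueness for the linearized incomplete problem on the disk via a
conformal map. Let `ψ` be a holomorphic bijection from the upper half disk `D_h` onto
the unit disk `D` with holomorphic inverse `g : D → D_h`, and let `γ ∈ L²(D)` be such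
that `|g'| ≤ M` a.e. on the support of `γ`. If
`∫_D γ ⟨∇Im(g^n), ∇Im(g^k)⟩ = 0` for all `n, k ≥ 1`, then `γ = 0` a.e. on `D`. -/
theorem linearized_EIT_partial_boundary_uniqueness
    (ψ g : ℂ → ℂ)
    (hψ : DifferentiableOn ℂ ψ {z : ℂ | ‖z‖ < 1 ∧ 0 < z.im})
    (hψbij : Set.BijOn ψ {z : ℂ | ‖z‖ < 1 ∧ 0 < z.im} (Metric.ball (0:ℂ) 1))
    (hg : DifferentiableOn ℂ g (Metric.ball (0:ℂ) 1))
    (hgmaps : Set.MapsTo g (Metric.ball (0:ℂ) 1) {z : ℂ | ‖z‖ < 1 ∧ 0 < z.im})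
    (hψg : ∀ z ∈ Metric.ball (0:ℂ) 1, ψ (g z) = z)
    (hgψ : ∀ w ∈ {z : ℂ | ‖z‖ < 1 ∧ 0 < z.im}, g (ψ w) = w)
    (γ : ℂ → ℝ)
    (hγ : MemLp γ 2 (volume.restrict (Metric.ball (0:ℂ) 1)))
    (M : ℝ)
    (hM : ∀ᵐ z ∂(volume.restrict (Metric.ball (0:ℂ) 1)),
      γ z ≠ 0 → ‖deriv g z‖ ≤ M)
    (h : ∀ n k : ℕ, 1 ≤ n → 1 ≤ k →
      (∫ z in Metric.ball (0:ℂ) 1,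
        γ z * ⟪gradient (fun w : ℂ => ((g w) ^ n).im) z,
               gradient (fun w : ℂ => ((g w) ^ k).im) z⟫) = 0) :
    ∀ᵐ z ∂(volume.restrict (Metric.ball (0:ℂ) 1)), γ z = 0 :=
  linearized_EIT_partial_boundary_uniqueness_general ψ g hψ hg hgmaps hψg γ hγ M hM h
end
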